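/- arXiv:2212.14172 — 8 statements merged into one kernel-verified Lean document; each statement's English description precedes it below -/
import Mathlib

section
/- For a ring A, the following are equivalent: (1) the right A-module A is ℵ₀-distributive and A satisfies the minimum condition on principal right ideals; (2) A is right Artinian. -/
universe u

open Submodule

/-- A module `M` is `ℵ₀`-distributive if no subfactor of `M` (quotient of a submodule)
is (isomorphic to) a direct sum of infinitely many pairwise isomorphic simple modules.
The direct sum condition is phrased internally: the subfactor has no independent spanning
family, indexed by an infinite type, of pairwise isomorphic simple submodules. -/
def IsAleph0Distributive (R M : Type u) [Ring R] [AddCommGroup M] [Module R M] : Prop :=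
  ¬ ∃ (N : Submodule R M) (P : Submodule R N) (ι : Type u) (_ : Infinite ι)
      (T : ι → Submodule R (N ⧸ P)),
      iSupIndep T ∧ iSup T = ⊤ ∧ (∀ i, IsSimpleModule R (T i)) ∧
        ∀ i j, Nonempty ((T i) ≃ₗ[R] (T j))

/-- A module is distributive if its lattice of submodules is distributive. -/
def IsDistributiveModule (R M : Type u) [Ring R] [AddCommGroup M] [Module R M] : Prop :=
  ∀ X Y Z : Submodule R M, X ⊓ (Y ⊔ Z) = X ⊓ Y ⊔ X ⊓ Z

/-- A module is completely cyclic if every submodule is cyclic. -/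
def IsCompletelyCyclic (R M : Type u) [Ring R] [AddCommGroup M] [Module R M] : Prop :=
  ∀ N : Submodule R M, ∃ m : M, N = span R {m}

/-- A module is Bezout if every finitely generated submodule is cyclic. -/
def IsBezoutModule (R M : Type u) [Ring R] [AddCommGroup M] [Module R M] : Prop :=
  ∀ N : Submodule R M, N.FG → ∃ m : M, N = span R {m}

/-- A ring satisfies the minimum condition on principal right ideals if there is no
infinite strictly descending chain of principal right ideals. -/
def MinPrincipalRight (A : Type u) [Ring A] : Prop :=
  ¬ ∃ a : ℕ → A, StrictAnti fun n => span Aᵐᵒᵖ ({a n} : Set A)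

/-- A ring satisfies the minimum condition on principal left ideals if there is no
infinite strictly descending chain of principal left ideals. -/
def MinPrincipalLeft (A : Type u) [Ring A] : Prop :=
  ¬ ∃ a : ℕ → A, StrictAnti fun n => span A ({a n} : Set A)

/-- A module is indecomposable if it is nonzero and is not the direct sum of two
nonzero submodules. -/
def IsIndecomposableModule (R M : Type u) [Ring R] [AddCommGroup M] [Module R M] : Prop :=
  Nontrivial M ∧ ∀ N P : Submodule R M, IsCompl N P → N = ⊥ ∨ P = ⊥

/-- A ring `A` has (right) finite representation type if it is right Artinian and has,
up to isomorphism, only finitely many finitely generated indecomposable right modules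
(every finitely generated module is isomorphic to a quotient of some `Aⁿ`, so the
representatives may be taken of this form). -/
def HasFiniteRepresentationType (A : Type u) [Ring A] : Prop :=
  IsArtinian Aᵐᵒᵖ A ∧
    ∃ (n : ℕ) (k : Fin n → ℕ) (N : ∀ i, Submodule Aᵐᵒᵖ (Fin (k i) → A)),
      ∀ (M : Type u) [AddCommGroup M] [Module Aᵐᵒᵖ M],
        Module.Finite Aᵐᵒᵖ M → IsIndecomposableModule Aᵐᵒᵖ M →
          ∃ i, Nonempty (M ≃ₗ[Aᵐᵒᵖ] ((Fin (k i) → A) ⧸ N i))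

/-- `M` has only finitely many simple subfactors up to isomorphism. -/
def FinitelyManySimpleSubfactors (R M : Type u) [Ring R] [AddCommGroup M] [Module R M] : Prop :=
  ∃ (n : ℕ) (N : Fin n → Submodule R M) (P : ∀ i, Submodule R (N i)),
    ∀ (N' : Submodule R M) (P' : Submodule R N'), IsSimpleModule R (N' ⧸ P') →
      ∃ i, Nonempty ((N' ⧸ P') ≃ₗ[R] (N i ⧸ P i))

/-- A module is semi-Artinian if every nonzero quotient module contains a simple submodule. -/
def IsSemiArtinianModule (R M : Type u) [Ring R] [AddCommGroup M] [Module R M] : Prop :=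
  ∀ N : Submodule R M, N ≠ ⊤ → ∃ S : Submodule R (M ⧸ N), IsSimpleModule R S

/-- A ring is semilocal if its quotient by the Jacobson radical is semisimple. -/
def IsSemilocalRing (A : Type u) [Ring A] : Prop :=
  IsSemisimpleModule A (A ⧸ Ideal.jacobson (⊥ : Ideal A))

/-- A ring is semiprimary if it is semilocal and its Jacobson radical is nilpotent. -/
def IsSemiprimaryRing' (A : Type u) [Ring A] : Prop :=
  IsSemilocalRing A ∧ ∃ n : ℕ, 0 < n ∧ ∀ f : Fin n → A,
    (∀ i, f i ∈ Ideal.jacobson (⊥ : Ideal A)) → (List.ofFn f).prod = 0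

/-!
Write `R = Aᵐᵒᵖ`, so that the principal right ideals of `A` are the cyclic `R`-submodules
of `A`. The minimum condition makes `R ⧸ J(R)` semisimple: in a cyclic module with zero
radical a simple submodule `L` is complementary to a maximal submodule, so a minimal cyclic
`Rx` with `socle + Rx = ⊤` must vanish. Every simple module is a quotient of `R ⧸ J(R)`, so
there are only finitely many up to isomorphism, and a semisimple module with infinitely many
simple summands then has an isotypic component that is an infinite direct sum of copies of one
simple module. Hence `ℵ₀`-distributivity makes the socle of each quotient `A ⧸ K` Artinian.
The minimum condition also makes that socle essential, and a module all of whose quotients have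
an Artinian essential socle is Artinian: a descending chain with intersection `K` meets the
socle of `A ⧸ K` in a chain that stabilises, necessarily at `0`.
-/

section CyclicArtinian

variable {R M N : Type*} [Ring R] [AddCommGroup M] [Module R M]
  [AddCommGroup N] [Module R N]

variable (R M) in
def IsCyclicArtinian : Prop :=
  WellFounded fun x y : M => span R {x} < span R {y}

theorem isCyclicArtinian_iff :
    IsCyclicArtinian R M ↔ ¬ ∃ a : ℕ → M, StrictAnti fun n => span R {a n} := by
  refine ⟨fun h ⟨a, ha⟩ => ?_, fun h => ⟨fun x => by_contra fun hx => ?_⟩⟩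
  · exact (RelEmbedding.natGT a fun n => ha n.lt_succ_self).not_wellFounded h
  · obtain ⟨a, -, ha⟩ := not_acc_iff_exists_descending_chain.mp hx
    exact h ⟨a, strictAnti_nat_of_succ_lt ha⟩

theorem IsArtinian.isCyclicArtinian [IsArtinian R M] : IsCyclicArtinian R M :=
  InvImage.wf _ wellFounded_lt

theorem IsCyclicArtinian.of_surjective (h : IsCyclicArtinian R M) (f : M →ₗ[R] N)
    (hf : Function.Surjective f) : IsCyclicArtinian R N := by
  suffices ∀ x, Acc (fun y z : N => span R {y} < span R {z}) (f x) from
    ⟨fun y => (hf y).elim fun x hx => hx ▸ this x⟩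
  intro x
  induction x using h.induction with
  | _ x ih =>
    refine ⟨_, fun y hy => ?_⟩
    obtain ⟨r, rfl⟩ := mem_span_singleton.mp (hy.le (mem_span_singleton_self y))
    rw [← map_smul]
    refine ih _ ((span_singleton_smul_le R r x).lt_of_ne fun heq => hy.ne ?_)
    simpa only [map_span, Set.image_singleton, map_smul] using congrArg (map f) heq

theorem IsCyclicArtinian.exists_isSimpleModule_le (h : IsCyclicArtinian R M)
    {N : Submodule R M} (hN : N ≠ ⊥) : ∃ L ≤ N, IsSimpleModule R L := by
  obtain ⟨x, ⟨hxN, hx0⟩, hmin⟩ :=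
    h.has_min {x | x ∈ N ∧ x ≠ 0} ((Submodule.ne_bot_iff N).mp hN)
  refine ⟨span R {x}, (span_singleton_le_iff_mem _ _).mpr hxN,
    isSimpleModule_iff_isAtom.mpr ⟨(span_singleton_eq_bot.not).mpr hx0, fun B hB => ?_⟩⟩
  by_contra hB0
  obtain ⟨b, hbB, hb0⟩ := (Submodule.ne_bot_iff B).mp hB0
  exact hmin b ⟨hB.le.trans ((span_singleton_le_iff_mem _ _).mpr hxN) hbB, hb0⟩
    (((span_singleton_le_iff_mem _ _).mpr hbB).trans_lt hB)

end CyclicArtinian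

section Socle

variable {R M : Type*} [Ring R] [AddCommGroup M] [Module R M]

variable (R M) in
def socle : Submodule R M :=
  sSup {m | IsSimpleModule R m}

theorem le_socle (L : Submodule R M) [hL : IsSimpleModule R L] : L ≤ socle R M :=
  le_sSup hL

instance : IsSemisimpleModule R (socle R M) := by
  rw [socle, sSup_eq_iSup]
  exact isSemisimpleModule_biSup_of_isSemisimpleModule_submodule
    fun m (_ : IsSimpleModule R m) => inferInstance

theorem IsCyclicArtinian.eq_bot_of_disjoint_socle (h : IsCyclicArtinian R M)
    {N : Submodule R M} (hN : Disjoint (socle R M) N) : N = ⊥ := by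
  by_contra hN0
  obtain ⟨L, hLN, hL⟩ := h.exists_isSimpleModule_le hN0
  exact (isSimpleModule_iff_isAtom.mp hL).1 (le_bot_iff.mp (hN (le_socle L) hLN))

theorem exists_isCompl_of_jacobson_eq_bot (hJ : Module.jacobson R M = ⊥)
    {L : Submodule R M} (hL : IsAtom L) : ∃ H, IsCompl L H := by
  obtain ⟨H, hH, hLH⟩ : ∃ H : Submodule R M, IsCoatom H ∧ ¬ L ≤ H := by
    by_contra! hle
    exact hL.1 (le_bot_iff.mp (hJ ▸ le_sInf hle))
  refine ⟨H, disjoint_iff.mpr (hL.lt_iff.mp (inf_le_left.lt_of_ne fun h => ?_)),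
    codisjoint_iff.mpr (hH.lt_iff.mp (right_lt_sup.mpr hLH))⟩
  exact hLH (h ▸ inf_le_right)

theorem IsCyclicArtinian.isSemisimpleModule (h : IsCyclicArtinian R M)
    (hJ : Module.jacobson R M = ⊥) {x₀ : M} (hx₀ : span R {x₀} = ⊤) :
    IsSemisimpleModule R M := by
  obtain ⟨x, hx, hmin⟩ :=
    h.has_min {x | socle R M ⊔ span R {x} = ⊤} ⟨x₀, by simp [hx₀]⟩
  rw [← sSup_simples_eq_top_iff_isSemisimpleModule]
  change socle R M = ⊤
  by_contra hsoc
  obtain ⟨L, hLx, hL⟩ := h.exists_isSimpleModule_le (N := span R {x}) fun hx0 =>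
    hsoc (by simpa [hx0] using hx)
  obtain ⟨H, hLH⟩ := exists_isCompl_of_jacobson_eq_bot hJ (isSimpleModule_iff_isAtom.mp hL)
  obtain ⟨l, hl, y, hy, rfl⟩ := mem_sup.mp (hLH.codisjoint.eq_top ▸ mem_top : x ∈ L ⊔ H)
  have hyx : span R {y} ≤ span R {l + y} := (span_singleton_le_iff_mem _ _).mpr <| by
    simpa using sub_mem (mem_span_singleton_self (l + y)) (hLx hl)
  refine hmin y ?_ (hyx.lt_of_ne fun heq => ?_)
  · change socle R M ⊔ span R {y} = ⊤
    rw [eq_top_iff, ← hx]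
    refine sup_le le_sup_left ((span_singleton_le_iff_mem _ _).mpr ?_)
    exact add_mem (mem_sup_left (le_socle L hl)) (mem_sup_right (mem_span_singleton_self y))
  · have hLy : L ≤ H := (heq ▸ hLx).trans ((span_singleton_le_iff_mem _ _).mpr hy)
    exact (isSimpleModule_iff_isAtom.mp hL).1 (hLH.disjoint.eq_bot_of_le hLy)

end Socle

section SimpleTypes

variable {R M : Type*} [Ring R] [AddCommGroup M] [Module R M]

theorem IsCyclicArtinian.isSemisimpleModule_quotient_jacobson (h : IsCyclicArtinian R R) :
    IsSemisimpleModule R (R ⧸ Ring.jacobson R) := by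
  refine (h.of_surjective _ (Ring.jacobson R).mkQ_surjective).isSemisimpleModule
    (Module.jacobson_quotient_jacobson R R) (x₀ := Submodule.Quotient.mk 1) ?_
  refine eq_top_iff.mpr fun z _ => ?_
  obtain ⟨r, rfl⟩ := Submodule.Quotient.mk_surjective _ z
  exact mem_span_singleton.mpr ⟨r, by rw [← Submodule.Quotient.mk_smul, smul_eq_mul, mul_one]⟩

theorem exists_fin_linearEquiv_of_isSimpleModule [IsSemisimpleModule R (R ⧸ Ring.jacobson R)] :
    ∃ (n : ℕ) (V : Fin n → Submodule R (R ⧸ Ring.jacobson R)),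
      ∀ (T : Type*) [AddCommGroup T] [Module R T] [IsSimpleModule R T],
        ∃ i, Nonempty (T ≃ₗ[R] V i) := by
  classical
  obtain ⟨n, V, e, hV⟩ :=
    IsSemisimpleModule.exists_linearEquiv_fin_dfinsupp R (R ⧸ Ring.jacobson R)
  refine ⟨n, V, fun T _ _ _ => ?_⟩
  have := IsSimpleModule.nontrivial R T
  obtain ⟨t, ht⟩ := exists_ne (0 : T)
  let g : (R ⧸ Ring.jacobson R) →ₗ[R] T :=
    (Ring.jacobson R).liftQ (LinearMap.toSpanSingleton R T t)
      (IsSemisimpleModule.jacobson_le_ker R R R T _)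
  have hg1 : g (Submodule.Quotient.mk 1) = t := by
    simp only [g, liftQ_apply, LinearMap.toSpanSingleton_apply, one_smul]
  obtain ⟨i, hi⟩ : ∃ i, (g ∘ₗ e.symm.toLinearMap) ∘ₗ DFinsupp.lsingle i ≠ 0 := by
    by_contra! h0
    have := DFinsupp.lhom_ext' (φ := g ∘ₗ e.symm.toLinearMap) (ψ := 0) (by simpa using h0)
    have h1 := LinearMap.congr_fun this (e (Submodule.Quotient.mk 1))
    rw [LinearMap.comp_apply, LinearEquiv.coe_coe, e.symm_apply_apply, hg1] at h1
    exact ht h1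
  exact ⟨i, ⟨(LinearEquiv.ofBijective _ (LinearMap.bijective_of_ne_zero hi)).symm⟩⟩

theorem finite_isotypicComponents {ι Q : Type*} [Finite ι] [AddCommGroup Q] [Module R Q]
    (V : ι → Submodule R Q)
    (hV : ∀ (m : Submodule R M) [IsSimpleModule R m], ∃ i, Nonempty (m ≃ₗ[R] V i)) :
    Finite (isotypicComponents R M) := by
  have key : ∀ c : isotypicComponents R M, ∃ i, c.1 = isotypicComponent R M (V i) := by
    rintro ⟨_, S, _, rfl⟩
    obtain ⟨i, ⟨e⟩⟩ := hV S
    exact ⟨i, e.isotypicComponent_eq⟩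
  choose τ hτ using key
  exact Finite.of_injective τ fun c c' hcc' => Subtype.ext ((hτ c).trans (hcc' ▸ hτ c').symm)

end SimpleTypes

section HomogeneousSum

universe v

variable {R : Type*} [Ring R]

variable (R) in
def IsInfiniteHomogeneousSum (Q : Type v) [AddCommGroup Q] [Module R Q] : Prop :=
  ∃ (ι : Type v) (_ : Infinite ι) (T : ι → Submodule R Q),
    iSupIndep T ∧ iSup T = ⊤ ∧ (∀ i, IsSimpleModule R (T i)) ∧
      ∀ i j, Nonempty (T i ≃ₗ[R] T j)

theorem IsInfiniteHomogeneousSum.of_linearEquiv {Q Q' : Type v} [AddCommGroup Q] [Module R Q]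
    [AddCommGroup Q'] [Module R Q'] (e : Q ≃ₗ[R] Q') (h : IsInfiniteHomogeneousSum R Q) :
    IsInfiniteHomogeneousSum R Q' := by
  obtain ⟨ι, hι, T, hind, htop, hsimple, hiso⟩ := h
  refine ⟨ι, hι, fun i => (T i).map (e : Q →ₗ[R] Q'),
    hind.map_orderIso (orderIsoMapComap e), ?_, fun i => ?_, fun i j => ?_⟩
  · rw [← Submodule.map_iSup, htop, Submodule.map_top, LinearEquiv.range]
  · have := hsimple i
    exact IsSimpleModule.congr (e.submoduleMap (T i)).symm
  · exact ⟨(e.submoduleMap (T i)).symm.trans ((hiso i j).some.trans (e.submoduleMap (T j)))⟩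

theorem isInfiniteHomogeneousSum_finsupp {ι S : Type v} [Infinite ι] [AddCommGroup S]
    [Module R S] [IsSimpleModule R S] : IsInfiniteHomogeneousSum R (ι →₀ S) := by
  let e i := LinearEquiv.ofInjective (Finsupp.lsingle i : S →ₗ[R] ι →₀ S)
    (Finsupp.single_injective i)
  exact ⟨ι, ‹_›, fun i => LinearMap.range (Finsupp.lsingle i),
    iSupIndep_range_lsingle ι R S, Finsupp.iSup_lsingle_range,
    fun i => IsSimpleModule.congr (e i).symm, fun i j => ⟨(e i).symm.trans (e j)⟩⟩

theorem IsSemisimpleModule.isArtinian_of_finite_isotypicComponents {M : Type v}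
    [AddCommGroup M] [Module R M] [IsSemisimpleModule R M] [Finite (isotypicComponents R M)]
    (h : ∀ W : Submodule R M, ¬ IsInfiniteHomogeneousSum R W) : IsArtinian R M := by
  have (c : isotypicComponents R M) : IsArtinian R c := by
    obtain ⟨ι, -, S, hS, ⟨e⟩⟩ := (IsIsotypic.isotypicComponents c.2).linearEquiv_finsupp
    cases finite_or_infinite ι
    · exact isArtinian_of_linearEquiv e.symm
    · exact (h c (isInfiniteHomogeneousSum_finsupp.of_linearEquiv e.symm)).elim
  have : IsArtinian R ↥(⨆ c : isotypicComponents R M, c.1) := isArtinian_iSup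
  rw [← sSup_eq_iSup', sSup_isotypicComponents] at this
  exact isArtinian_of_linearEquiv topEquiv

end HomogeneousSum

section Aleph0Distributive

variable {R M : Type u} [Ring R] [AddCommGroup M] [Module R M]

theorem isAleph0Distributive_iff : IsAleph0Distributive R M ↔
    ∀ (N : Submodule R M) (P : Submodule R N), ¬ IsInfiniteHomogeneousSum R (N ⧸ P) := by
  simp only [IsAleph0Distributive, IsInfiniteHomogeneousSum, not_exists]

theorem IsArtinian.isAleph0Distributive [IsArtinian R M] : IsAleph0Distributive R M :=
  isAleph0Distributive_iff.mpr fun _ _ ⟨ι, _, _, hind, _, hsimple, _⟩ =>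
    have := WellFoundedLT.finite_of_iSupIndep hind
      fun i => (isSimpleModule_iff_isAtom.mp (hsimple i)).1
    not_finite ι

theorem IsAleph0Distributive.not_isInfiniteHomogeneousSum (hd : IsAleph0Distributive R M)
    (K : Submodule R M) (W : Submodule R (M ⧸ K)) : ¬ IsInfiniteHomogeneousSum R W := by
  let f := K.mkQ ∘ₗ (W.comap K.mkQ).subtype
  have hf : LinearMap.range f = W := by
    rw [LinearMap.range_comp, range_subtype, map_comap_eq_of_surjective K.mkQ_surjective]
  exact fun h => isAleph0Distributive_iff.mp hd _ (LinearMap.ker f)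
    (h.of_linearEquiv (f.quotKerEquivRange.trans (LinearEquiv.ofEq _ _ hf)).symm)

end Aleph0Distributive

section Artinian

variable {R M : Type*} [Ring R] [AddCommGroup M] [Module R M]

theorem IsCyclicArtinian.exists_eq_bot_of_iInf_eq_bot (h : IsCyclicArtinian R M)
    [IsArtinian R (socle R M)] {N : ℕ → Submodule R M} (hN : Antitone N)
    (h0 : ⨅ n, N n = ⊥) :
    ∃ n, ∀ m ≥ n, N m = ⊥ := by
  let S := socle R M
  obtain ⟨n, hn⟩ := IsArtinian.monotone_stabilizes
    (⟨fun k => OrderDual.toDual ((N k).comap S.subtype), fun _ _ hij => comap_mono (hN hij)⟩ :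
      ℕ →o (Submodule R S)ᵒᵈ)
  have hSn : (N n).comap S.subtype = ⊥ := by
    have hS : ⨅ k, (N k).comap S.subtype = ⊥ := by
      rw [← comap_iInf, h0, comap_bot, ker_subtype]
    refine le_bot_iff.mp (hS ▸ le_iInf fun k => ?_)
    rcases le_total k n with hkn | hnk
    · exact comap_mono (hN hkn)
    · exact (congrArg OrderDual.ofDual (hn k hnk)).le
  refine ⟨n, fun m hm => h.eq_bot_of_disjoint_socle ?_⟩
  rw [disjoint_iff_comap_eq_bot, ← hSn]
  exact congrArg OrderDual.ofDual (hn m hm).symm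

theorem IsCyclicArtinian.isArtinian_of_isArtinian_socle (h : IsCyclicArtinian R M)
    (hsoc : ∀ K : Submodule R M, IsArtinian R (socle R (M ⧸ K))) : IsArtinian R M := by
  rw [← monotone_stabilizes_iff_artinian]
  intro f
  let K := ⨅ k, OrderDual.ofDual (f k)
  have hK (k : ℕ) : K ≤ OrderDual.ofDual (f k) := iInf_le _ k
  let N k := (OrderDual.ofDual (f k)).map K.mkQ
  have hN0 : ⨅ k, N k = ⊥ := by
    refine eq_bot_iff.mpr fun x hx => ?_
    obtain ⟨y, rfl⟩ := K.mkQ_surjective x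
    refine (Submodule.Quotient.mk_eq_zero K).mpr (mem_iInf _ |>.mpr fun k => ?_)
    have := mem_comap.mpr (mem_iInf _ |>.mp hx k)
    rwa [comap_map_mkQ, sup_eq_right.mpr (hK k)] at this
  have := hsoc K
  obtain ⟨n, hn⟩ := (h.of_surjective K.mkQ K.mkQ_surjective).exists_eq_bot_of_iInf_eq_bot
    (fun _ _ hij => map_mono (f.monotone hij)) hN0
  have hKn (k : ℕ) (hk : n ≤ k) : OrderDual.ofDual (f k) = K :=
    le_antisymm ((LinearMap.le_ker_iff_map.mpr (hn k hk)).trans_eq (ker_mkQ K)) (hK k)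
  exact ⟨n, fun m hm => congrArg OrderDual.toDual ((hKn n le_rfl).trans (hKn m hm).symm)⟩

end Artinian

theorem IsAleph0Distributive.isArtinian {R M : Type u} [Ring R] [AddCommGroup M] [Module R M]
    (hR : IsCyclicArtinian R R) (hM : IsCyclicArtinian R M) (hd : IsAleph0Distributive R M) :
    IsArtinian R M := by
  have := hR.isSemisimpleModule_quotient_jacobson
  obtain ⟨n, V, hV⟩ := exists_fin_linearEquiv_of_isSimpleModule (R := R)
  refine hM.isArtinian_of_isArtinian_socle fun K => ?_
  have := finite_isotypicComponents (M := socle R (M ⧸ K)) V fun m _ => hV m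
  exact IsSemisimpleModule.isArtinian_of_finite_isotypicComponents fun W hW =>
    hd.not_isInfiniteHomogeneousSum K (W.map (socle R _).subtype)
      (hW.of_linearEquiv (W.equivMapOfInjective _ (subtype_injective _)))

theorem stmt5 (A : Type u) [Ring A] :
    (IsAleph0Distributive Aᵐᵒᵖ A ∧ MinPrincipalRight A) ↔ IsArtinian Aᵐᵒᵖ A := by
  rw [MinPrincipalRight, ← isCyclicArtinian_iff]
  let e : A ≃ₗ[Aᵐᵒᵖ] Aᵐᵒᵖ := MulOpposite.opLinearEquiv Aᵐᵒᵖ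
  exact ⟨fun ⟨hd, hA⟩ => hd.isArtinian (hA.of_surjective e e.surjective) hA,
    fun _ => ⟨IsArtinian.isAleph0Distributive, IsArtinian.isCyclicArtinian⟩⟩
end

section
/- Let M be an ℵ₀-distributive right module over a ring A such that the set of isomorphism classes of simple subfactors of M is finite (for example, this holds when A is semilocal). Then M is quotient finite-dimensional, i.e., no quotient of M contains an infinite direct sum of nonzero submodules. -/
/-!
Let `(T i)` be an infinite independent family of nonzero submodules of `M ⧸ Q`. Each `T i`
contains a nonzero cyclic submodule `C i`, which has a simple quotient `C i ⧸ W i`; this is a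
subfactor of `M`. As there are only finitely many simple subfactors up to isomorphism, infinitely
many of the `C i ⧸ W i` are isomorphic to one simple `S`. The corresponding `C i` still form a
direct sum inside `M ⧸ Q`, and its quotient `⨁ C i ⧸ W i ≅ ⨁ S` is a subfactor of `M` that is an
infinite direct sum of copies of `S`, contradicting `ℵ₀`-distributivity.
-/

universe u

open Submodule

section Subfactor

variable {R M Z Z' : Type*} [Ring R] [AddCommGroup M] [Module R M]
  [AddCommGroup Z] [Module R Z] [AddCommGroup Z'] [Module R Z']

def IsSubfactor (R M Z : Type*) [Ring R] [AddCommGroup M] [Module R M]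
    [AddCommGroup Z] [Module R Z] : Prop :=
  ∃ (N : Submodule R M) (f : N →ₗ[R] Z), Function.Surjective f

namespace IsSubfactor

theorem of_injective (f : Z →ₗ[R] M) (hf : Function.Injective f) : IsSubfactor R M Z :=
  ⟨LinearMap.range f, (LinearEquiv.ofInjective f hf).symm.toLinearMap,
    (LinearEquiv.ofInjective f hf).symm.surjective⟩

theorem of_surjective (h : IsSubfactor R M Z) (g : Z →ₗ[R] Z') (hg : Function.Surjective g) :
    IsSubfactor R M Z' :=
  let ⟨N, f, hf⟩ := h
  ⟨N, g ∘ₗ f, hg.comp hf⟩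

theorem of_quotient {Q : Submodule R M} (h : IsSubfactor R (M ⧸ Q) Z) : IsSubfactor R M Z := by
  obtain ⟨N, f, hf⟩ := h
  refine ⟨N.comap Q.mkQ, f ∘ₗ Q.mkQ.restrict fun _ hx => hx, hf.comp ?_⟩
  rintro ⟨y, hy⟩
  obtain ⟨x, rfl⟩ := Q.mkQ_surjective y
  exact ⟨⟨x, hy⟩, rfl⟩

theorem exists_quotient_equiv (h : IsSubfactor R M Z) :
    ∃ (N : Submodule R M) (P : Submodule R N), Nonempty ((N ⧸ P) ≃ₗ[R] Z) :=
  let ⟨N, f, hf⟩ := h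
  ⟨N, LinearMap.ker f, ⟨f.quotKerEquivOfSurjective hf⟩⟩

end IsSubfactor

theorem Module.Finite.exists_isSimpleModule_quotient [Module.Finite R M] [Nontrivial M] :
    ∃ W : Submodule R M, IsSimpleModule R (M ⧸ W) := by
  obtain ⟨W, hW, -⟩ := (eq_top_or_exists_le_coatom (⊥ : Submodule R M)).resolve_left bot_ne_top
  exact ⟨W, isSimpleModule_iff_isCoatom.mpr hW⟩

theorem iSupIndep.isSubfactor_finsupp {ι : Type*} {C : ι → Submodule R M} (hC : iSupIndep C)
    (f : ∀ i, C i →ₗ[R] Z) (hf : ∀ i, Function.Surjective (f i)) :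
    IsSubfactor R M (ι →₀ Z) := by
  classical
  refine (IsSubfactor.of_injective _ hC.dfinsupp_lsum_injective).of_surjective
    ((finsuppLequivDFinsupp R).symm.toLinearMap ∘ₗ DFinsupp.mapRange.linearMap f) ?_
  exact (finsuppLequivDFinsupp R).symm.surjective.comp
    ((DFinsupp.mapRange_surjective _ fun i => map_zero (f i)).mpr hf)

theorem IsAleph0Distributive.not_isSubfactor_finsupp {R M : Type u} [Ring R] [AddCommGroup M]
    [Module R M] (h : IsAleph0Distributive R M) (ι S : Type u) [Infinite ι] [AddCommGroup S]
    [Module R S] [IsSimpleModule R S] : ¬ IsSubfactor R M (ι →₀ S) := by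
  intro hS
  obtain ⟨N, P, ⟨e⟩⟩ := hS.exists_quotient_equiv
  let T i := (LinearMap.range (Finsupp.lsingle i : S →ₗ[R] ι →₀ S)).map e.symm.toLinearMap
  have hT : ∀ i, S ≃ₗ[R] T i := fun i =>
    (LinearEquiv.ofInjective _ (Finsupp.single_injective i)).trans (e.symm.submoduleMap _)
  refine h ⟨N, P, ι, ‹_›, T,
    e.symm.toLinearMap.iSupIndep_map e.symm.injective (iSupIndep_range_lsingle ι R S), ?_,
    fun i => .congr (hT i).symm, fun i j => ⟨(hT i).symm.trans (hT j)⟩⟩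
  rw [← Submodule.map_iSup, Finsupp.iSup_lsingle_range, Submodule.map_top, LinearEquiv.range]

theorem FinitelyManySimpleSubfactors.exists_infinite_linearEquiv {R M : Type u} [Ring R]
    [AddCommGroup M] [Module R M] (h : FinitelyManySimpleSubfactors R M) {ι : Type*} [Infinite ι]
    (S : ι → Type*) [∀ i, AddCommGroup (S i)] [∀ i, Module R (S i)] [∀ i, IsSimpleModule R (S i)]
    (hS : ∀ i, IsSubfactor R M (S i)) :
    ∃ (N : Submodule R M) (P : Submodule R N) (s : Set ι),
      s.Infinite ∧ ∀ i ∈ s, Nonempty (S i ≃ₗ[R] N ⧸ P) := by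
  obtain ⟨n, N, P, hclass⟩ := h
  have hiso : ∀ i, ∃ j, Nonempty (S i ≃ₗ[R] N j ⧸ P j) := fun i => by
    obtain ⟨N', P', ⟨e⟩⟩ := (hS i).exists_quotient_equiv
    obtain ⟨j, ⟨e'⟩⟩ := hclass N' P' (.congr e)
    exact ⟨j, ⟨e.symm.trans e'⟩⟩
  choose φ hφ using hiso
  obtain ⟨j, hj⟩ := Finite.exists_infinite_fiber φ
  exact ⟨N j, P j, φ ⁻¹' {j}, Set.infinite_coe_iff.mp hj, fun i hi => hi ▸ hφ i⟩

end Subfactor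

theorem stmt10 (A M : Type u) [Ring A] [AddCommGroup M] [Module Aᵐᵒᵖ M]
    (h0 : IsAleph0Distributive Aᵐᵒᵖ M) (hfin : FinitelyManySimpleSubfactors Aᵐᵒᵖ M) :
    ∀ Q : Submodule Aᵐᵒᵖ M,
      ¬ ∃ (ι : Type u) (_ : Infinite ι) (T : ι → Submodule Aᵐᵒᵖ (M ⧸ Q)),
        iSupIndep T ∧ ∀ i, T i ≠ ⊥ := by
  rintro Q ⟨ι, _, T, hT, hT0⟩
  choose x hxT hx0 using fun i => exists_mem_ne_zero_of_ne_bot (hT0 i)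
  let C i := span Aᵐᵒᵖ {x i}
  have hC : iSupIndep C := hT.mono fun i => (span_singleton_le_iff_mem _ _).mpr (hxT i)
  have (i : ι) : Nontrivial (C i) := nontrivial_span_singleton (hx0 i)
  choose W hW using fun i => Module.Finite.exists_isSimpleModule_quotient (R := Aᵐᵒᵖ) (M := C i)
  have hsub : ∀ i, IsSubfactor Aᵐᵒᵖ M (C i ⧸ W i) := fun i =>
    ((IsSubfactor.of_injective _ (C i).injective_subtype).of_surjective _
      (W i).mkQ_surjective).of_quotient
  obtain ⟨N, P, s, hs, e⟩ := hfin.exists_infinite_linearEquiv (fun i => C i ⧸ W i) hsub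
  have : Infinite s := hs.to_subtype
  obtain ⟨i₀, hi₀⟩ := hs.nonempty
  have : IsSimpleModule Aᵐᵒᵖ (N ⧸ P) := .congr (e i₀ hi₀).some.symm
  have hsum : IsSubfactor Aᵐᵒᵖ (M ⧸ Q) (s →₀ N ⧸ P) :=
    (hC.comp Subtype.val_injective).isSubfactor_finsupp
      (fun i => (e i i.2).some.toLinearMap ∘ₗ (W i).mkQ)
      fun i => (e i i.2).some.surjective.comp (W i).mkQ_surjective
  exact h0.not_isSubfactor_finsupp s (N ⧸ P) hsum.of_quotient
end

section
/- Let M be an ℵ₀-distributive semi-Artinian right module over a ring A such that the set of isomorphism classes of simple subfactors of M is finite (for example, this holds when A is semilocal). Then M is an Artinian module. -/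
universe u

open Submodule

/-!
Suppose `M` is not Artinian and let `N₀ > N₁ > ⋯` be a strictly descending chain with intersection
`K`. In `M ⧸ K` the images of the `Nₙ` are nonzero with zero intersection. Semi-Artinianity makes
the submodule lattice of `M ⧸ K` atomic, so each image contains a simple submodule. Hence the socle
of `M ⧸ K`, a direct sum of simple modules, has infinitely many summands: a finite sum would be
Artinian and so would meet some image trivially. Since there are only finitely many simple
subfactors up to isomorphism, infinitely many summands are isomorphic, and their sum is a subfactor
of `M` contradicting `ℵ₀`-distributivity.
-/

section LatticeLemmas

variable {α : Type*} [CompleteLattice α] [IsModularLattice α] [IsCompactlyGenerated α]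

/- For `a < b`, take `y ≥ a` maximal with `y ⊓ b = a` (Zorn) and a cover `y ⋖ s`. Then `s ⊓ b`
covers `a`: if `a < z ≤ s ⊓ b` then `y ⊔ z = s`, so `z = (y ⊔ z) ⊓ b = s ⊓ b` by the modular law. -/
theorem isStronglyAtomic_of_forall_exists_covBy (h : ∀ x : α, x ≠ ⊤ → ∃ c, x ⋖ c) :
    IsStronglyAtomic α := by
  refine ⟨fun a b hab => ?_⟩
  obtain ⟨y, hay, hy, hymax⟩ := zorn_le_nonempty₀ {y : α | y ⊓ b = a}
    (fun c hcs hc z hz => ⟨sSup c, by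
      rw [Set.mem_ofPred_eq, hc.directedOn.sSup_inf_eq, biSup_congr hcs, biSup_const ⟨z, hz⟩],
      fun _ => le_sSup⟩) a (inf_eq_left.2 hab.le)
  obtain ⟨s, hys⟩ := h y fun h => hab.ne (by rw [← hy, h, top_inf_eq])
  have has : a < s ⊓ b := (le_inf (hay.trans hys.le) hab.le).lt_of_ne fun heq =>
    hys.lt.not_ge (hymax heq.symm hys.le)
  refine ⟨s ⊓ b, ⟨has, fun z haz hzs => ?_⟩, inf_le_right⟩
  have hzb : z ≤ b := hzs.le.trans inf_le_right
  have hyz : y ⊔ z = s :=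
    (hys.eq_or_eq le_sup_left (sup_le hys.le (hzs.le.trans inf_le_left))).resolve_left
      fun h => haz.not_ge (hy ▸ le_inf (h ▸ le_sup_right) hzb)
  refine hzs.ne ?_
  rw [← hyz, sup_comm, sup_inf_assoc_of_le y hzb, hy, sup_eq_left.2 haz.le]

end LatticeLemmas

section Modules

variable {R M : Type*} [Ring R] [AddCommGroup M] [Module R M]

noncomputable def Submodule.comapMkQQuotientEquiv (K : Submodule R M) (U : Submodule R (M ⧸ K)) :
    (U.comap K.mkQ ⧸ K.comap (U.comap K.mkQ).subtype) ≃ₗ[R] U :=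
  let f : U.comap K.mkQ →ₗ[R] M ⧸ K := K.mkQ ∘ₗ (U.comap K.mkQ).subtype
  have hker : K.comap (U.comap K.mkQ).subtype = LinearMap.ker f := by
    rw [LinearMap.ker_comp, Submodule.ker_mkQ]
  have hrange : LinearMap.range f = U := by
    rw [LinearMap.range_comp, Submodule.range_subtype,
      Submodule.map_comap_eq_of_surjective K.mkQ_surjective]
  (Submodule.quotEquivOfEq _ _ hker).trans (f.quotKerEquivRange.trans (LinearEquiv.ofEq _ _ hrange))

theorem Submodule.iInf_map_mkQ_iInf_eq_bot {ι : Sort*} (N : ι → Submodule R M) :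
    ⨅ i, (N i).map (⨅ j, N j).mkQ = ⊥ := by
  refine eq_bot_iff.2 fun x hx => ?_
  obtain ⟨y, rfl⟩ := (⨅ j, N j).mkQ_surjective x
  have hy : ∀ i, y ∈ N i := fun i => by
    have := Submodule.mem_comap.2 ((Submodule.mem_iInf _).1 hx i)
    rwa [Submodule.comap_map_mkQ, sup_eq_right.2 (iInf_le N i)] at this
  exact (Submodule.Quotient.mk_eq_zero _).2 ((Submodule.mem_iInf _).2 hy)

theorem exists_inf_eq_bot_of_isArtinian (T : Submodule R M) [IsArtinian R T]
    {N : ℕ → Submodule R M} (hN : Antitone N) (hinf : ⨅ n, N n = ⊥) : ∃ n, T ⊓ N n = ⊥ := by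
  let f : ℕ →o (Submodule R T)ᵒᵈ :=
    ⟨fun n => OrderDual.toDual ((N n).comap T.subtype), fun _ _ h => Submodule.comap_mono (hN h)⟩
  obtain ⟨n, hn⟩ := IsArtinian.monotone_stabilizes f
  have hle : ∀ k, (N n).comap T.subtype ≤ (N k).comap T.subtype := fun k =>
    (le_total k n).elim (fun h => Submodule.comap_mono (hN h)) fun h => (hn k h).ge
  have hbot : (N n).comap T.subtype = ⊥ := by
    refine eq_bot_iff.2 ((le_iInf hle).trans ?_)
    rw [← Submodule.comap_iInf, hinf, Submodule.comap_bot, Submodule.ker_subtype]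
  exact ⟨n, by rw [← Submodule.map_comap_subtype, hbot, Submodule.map_bot]⟩

theorem exists_infinite_sSupIndep_atoms [IsAtomic (Submodule R M)] {N : ℕ → Submodule R M}
    (hN : Antitone N) (hne : ∀ n, N n ≠ ⊥) (hinf : ⨅ n, N n = ⊥) :
    ∃ t : Set (Submodule R M), t.Infinite ∧ sSupIndep t ∧ ∀ a ∈ t, IsAtom a := by
  obtain ⟨t, hind, hsup, hatom⟩ :=
    exists_sSupIndep_of_sSup_atoms (sSup {a : Submodule R M | IsAtom a})
      (congrArg sSup (Set.ext fun _ => ⟨And.right, fun ha => ⟨le_sSup ha, ha⟩⟩))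
  refine ⟨t, fun hfin => ?_, hind, fun a ha => hatom ha⟩
  have : Finite t := hfin.to_subtype
  have : ∀ a : t, IsSimpleModule R a := fun a => isSimpleModule_iff_isAtom.2 (hatom a.2)
  have : IsArtinian R (sSup t : Submodule R M) := by rw [sSup_eq_iSup']; infer_instance
  obtain ⟨n, hn⟩ := exists_inf_eq_bot_of_isArtinian (sSup t) hN hinf
  obtain ⟨a, ha, haN⟩ := (eq_bot_or_exists_atom_le (N n)).resolve_left (hne n)
  exact ha.1 (le_bot_iff.1 (hn ▸ le_inf (hsup ▸ le_sSup ha) haN))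

end Modules

section

variable {R M : Type u} [Ring R] [AddCommGroup M] [Module R M]

theorem IsSemiArtinianModule.exists_covBy (hsa : IsSemiArtinianModule R M) {N : Submodule R M}
    (hN : N ≠ ⊤) : ∃ c, N ⋖ c := by
  obtain ⟨S, hS⟩ := hsa N hN
  exact ⟨S.comap N.mkQ, (covBy_iff_quot_is_simple (Submodule.le_comap_mkQ N S)).2
    ((N.comapMkQQuotientEquiv S).isSimpleModule_iff.2 hS)⟩

theorem IsSemiArtinianModule.isAtomic_quotient (hsa : IsSemiArtinianModule R M)
    (K : Submodule R M) : IsAtomic (Submodule R (M ⧸ K)) := by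
  have := isStronglyAtomic_of_forall_exists_covBy fun _ => hsa.exists_covBy
  have := (Set.ordConnected_Ici (a := K)).isStronglyAtomic
  exact (Submodule.comapMkQRelIso K).isAtomic_iff.2 inferInstance

theorem IsAleph0Distributive.finite_of_iSupIndep_of_iSup_eq_top (h0 : IsAleph0Distributive R M)
    (K : Submodule R M) {U : Submodule R (M ⧸ K)} {ι : Type u} (T : ι → Submodule R U)
    (hind : iSupIndep T) (htop : iSup T = ⊤) (hsimple : ∀ i, IsSimpleModule R (T i))
    (hiso : ∀ i j, Nonempty (T i ≃ₗ[R] T j)) : Finite ι := by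
  by_contra hfin
  rw [not_finite_iff_infinite] at hfin
  let e := (K.comapMkQQuotientEquiv U).symm
  let φ := Submodule.orderIsoMapComap e
  refine h0 ⟨_, _, ι, hfin, φ ∘ T, hind.map_orderIso φ, ?_,
    fun i => (e.submoduleMap (T i)).isSimpleModule_iff.1 (hsimple i),
    fun i j => (hiso i j).map fun f => (e.submoduleMap (T i)).symm ≪≫ₗ f ≪≫ₗ e.submoduleMap (T j)⟩
  change ⨆ i, φ (T i) = ⊤
  rw [← φ.map_iSup, htop, φ.map_top]

theorem IsAleph0Distributive.finite_of_iSupIndep (h0 : IsAleph0Distributive R M)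
    (hfin : FinitelyManySimpleSubfactors R M) (K : Submodule R M) {ι : Type u}
    {S : ι → Submodule R (M ⧸ K)} (hind : iSupIndep S) (hsimple : ∀ i, IsSimpleModule R (S i)) :
    Finite ι := by
  classical
  obtain ⟨n, N, P, hcl⟩ := hfin
  have hclass : ∀ i, ∃ k, Nonempty (S i ≃ₗ[R] N k ⧸ P k) := fun i =>
    let e := K.comapMkQQuotientEquiv (S i)
    (hcl _ _ (e.isSimpleModule_iff.2 (hsimple i))).imp fun _ => Nonempty.map e.symm.trans
  choose c hc using hclass
  by_contra hinf
  rw [not_finite_iff_infinite] at hinf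
  obtain ⟨k, hk⟩ := Finite.exists_infinite_fiber c
  let s := c ⁻¹' {k}
  obtain ⟨hind', htop⟩ := (DirectSum.isInternal_submodule_iff_iSupIndep_and_iSup_eq_top _).1
    (DirectSum.isInternal_biSup_submodule_of_iSupIndep s (hind.comp Subtype.val_injective))
  let e : ∀ i : s, (S i).comap (⨆ i ∈ s, S i).subtype ≃ₗ[R] S i := fun i =>
    Submodule.comapSubtypeEquivOfLe (le_biSup S i.2)
  have hck : ∀ i : s, Nonempty (S i ≃ₗ[R] N k ⧸ P k) := fun i => (i.2 : c i = k) ▸ hc i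
  exact not_finite_iff_infinite.2 hk (h0.finite_of_iSupIndep_of_iSup_eq_top K _ hind' htop
    (fun i => (e i).isSimpleModule_iff.2 (hsimple i))
    fun i j => ⟨e i ≪≫ₗ (hck i).some ≪≫ₗ (hck j).some.symm ≪≫ₗ (e j).symm⟩)

end

theorem stmt11 (A M : Type u) [Ring A] [AddCommGroup M] [Module Aᵐᵒᵖ M]
    (h0 : IsAleph0Distributive Aᵐᵒᵖ M) (hsa : IsSemiArtinianModule Aᵐᵒᵖ M)
    (hfin : FinitelyManySimpleSubfactors Aᵐᵒᵖ M) :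
    IsArtinian Aᵐᵒᵖ M := by
  by_contra hart
  obtain ⟨N, hN⟩ : ∃ N : ℕ → Submodule Aᵐᵒᵖ M, StrictAnti N := by
    rw [isArtinian_iff, RelEmbedding.wellFounded_iff_isEmpty, not_isEmpty_iff] at hart
    obtain ⟨f⟩ := hart
    exact ⟨f, fun _ _ h => f.map_rel_iff.2 h⟩
  set K := ⨅ n, N n
  have := hsa.isAtomic_quotient K
  have hne : ∀ n, (N n).map K.mkQ ≠ ⊥ := fun n h =>
    (hN n.lt_succ_self).not_ge <| (Submodule.map_le_iff_le_comap.1 h.le).trans <| by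
      rw [Submodule.comap_bot, Submodule.ker_mkQ]; exact iInf_le N (n + 1)
  obtain ⟨t, ht, hind, hatom⟩ := exists_infinite_sSupIndep_atoms
    (fun _ _ h => Submodule.map_mono (hN.antitone h)) hne (Submodule.iInf_map_mkQ_iInf_eq_bot N)
  exact ht (Set.finite_coe_iff.1 (h0.finite_of_iSupIndep hfin K ((sSupIndep_iff t).1 hind)
    fun a => isSimpleModule_iff_isAtom.2 (hatom a a.2)))
end

section
/- If A is a semilocal ring, then every finitely generated distributive right A-module is cyclic; consequently, every distributive right A-module is a Bezout module. -/
universe u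

open Submodule

/-!
Let `J` be the Jacobson radical of a ring `R` with `R ⧸ J` semisimple, and `M` a finitely
generated distributive `R`-module. Then `M ⧸ J M` is semisimple, finitely generated and
distributive, hence cyclic: if `R m` is a maximal cyclic submodule and `y ≠ 0` lies in a
complement of it, distributivity gives `R (m + y) = R m ⊕ R y`. Nakayama's lemma lifts a
generator of `M ⧸ J M` to one of `M`. Right `A`-modules are `Aᵐᵒᵖ`-modules, and semilocality is
left-right symmetric because `J(Aᵐᵒᵖ)` is the image of `J(A)`.
-/

open MulOpposite

section

variable {R M : Type u} [Ring R] [AddCommGroup M] [Module R M]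

theorem Submodule.eq_top_of_sup_jacobson_smul_eq_top [Module.Finite R M] {N : Submodule R M}
    (h : N ⊔ Ring.jacobson R • ⊤ = ⊤) : N = ⊤ := by
  have htop : (⊤ : Submodule R (M ⧸ N)) ≤ Ring.jacobson R • ⊤ := by
    have := congrArg (map N.mkQ) h
    rw [Submodule.map_sup, map_smul'', map_top, range_mkQ, mkQ_map_self, bot_sup_eq] at this
    exact this.ge
  have := Module.Finite.fg_top.eq_bot_of_le_jacobson_smul htop
  rwa [← Quotient.subsingleton_iff, ← Submodule.subsingleton_iff R, ← subsingleton_iff_bot_eq_top,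
    eq_comm]

namespace IsDistributiveModule

theorem submodule (h : IsDistributiveModule R M) (N : Submodule R M) :
    IsDistributiveModule R N := by
  intro X Y Z
  apply map_injective_of_injective N.injective_subtype
  simpa only [Submodule.map_sup, map_inf _ N.injective_subtype] using h _ _ _

theorem quotient (h : IsDistributiveModule R M) (N : Submodule R M) :
    IsDistributiveModule R (M ⧸ N) := by
  intro X Y Z
  apply (comapMkQRelIso N).injective
  ext1
  simpa using h _ _ _

theorem span_singleton_le_span_singleton_add (h : IsDistributiveModule R M) {x y : M}
    (hxy : Disjoint (span R {x}) (span R {y})) : span R {x} ≤ span R {x + y} := by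
  have hx : span R {x} ≤ span R {x + y} ⊔ span R {y} := by
    simpa [span_singleton_le_iff_mem] using
      sub_mem_sup (mem_span_singleton_self (x + y)) (mem_span_singleton_self y)
  rw [← inf_eq_left.mpr hx, h, disjoint_iff.mp hxy, sup_bot_eq]
  exact inf_le_right

theorem span_singleton_add_eq_sup (h : IsDistributiveModule R M) {x y : M}
    (hxy : Disjoint (span R {x}) (span R {y})) :
    span R {x + y} = span R {x} ⊔ span R {y} :=
  le_antisymm ((span_singleton_le_iff_mem _ _).mpr
    (add_mem_sup (mem_span_singleton_self x) (mem_span_singleton_self y)))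
    (sup_le (h.span_singleton_le_span_singleton_add hxy)
      (add_comm x y ▸ h.span_singleton_le_span_singleton_add hxy.symm))

theorem exists_span_singleton_eq_top [IsNoetherian R M] [ComplementedLattice (Submodule R M)]
    (h : IsDistributiveModule R M) : ∃ m : M, span R {m} = ⊤ := by
  obtain ⟨_, ⟨m, rfl⟩, hmax⟩ := set_has_maximal_iff_noetherian.mpr ‹_›
    (Set.range fun m : M => span R {m}) ⟨_, 0, rfl⟩
  refine ⟨m, by_contra fun hm => ?_⟩
  obtain ⟨D, hD⟩ := exists_isCompl (span R {m})
  obtain ⟨y, hyD, hy⟩ := exists_mem_ne_zero_of_ne_bot fun hD0 : D = ⊥ =>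
    hm (by simpa [hD0] using hD.sup_eq_top)
  have hdisj : Disjoint (span R {m}) (span R {y}) :=
    hD.disjoint.mono_right ((span_singleton_le_iff_mem y D).mpr hyD)
  refine hmax _ ⟨m + y, rfl⟩ ?_
  simp only [h.span_singleton_add_eq_sup hdisj, left_lt_sup, span_singleton_le_iff_mem]
  exact fun hym => hy (disjoint_def.mp hD.disjoint y hym hyD)

theorem exists_span_singleton_eq_top_of_semilocal [IsSemisimpleRing (R ⧸ Ring.jacobson R)]
    [Module.Finite R M] (h : IsDistributiveModule R M) : ∃ m : M, span R {m} = ⊤ := by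
  set K : Submodule R M := Ring.jacobson R • ⊤
  have : IsSemisimpleModule R (M ⧸ K) :=
    (Module.isTorsionBySet_quotient_ideal_smul M _).isSemisimpleModule_iff.mp inferInstance
  obtain ⟨q, hq⟩ := (h.quotient K).exists_span_singleton_eq_top
  obtain ⟨m, rfl⟩ := K.mkQ_surjective q
  refine ⟨m, eq_top_of_sup_jacobson_smul_eq_top ?_⟩
  have := congrArg (comap K.mkQ) hq
  rwa [← Set.image_singleton, ← map_span, comap_map_mkQ, comap_top, sup_comm] at this

theorem isBezoutModule_of_semilocal [IsSemisimpleRing (R ⧸ Ring.jacobson R)]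
    (h : IsDistributiveModule R M) : IsBezoutModule R M := by
  intro N hN
  have : Module.Finite R N := Module.Finite.iff_fg.mpr hN
  obtain ⟨n, hn⟩ := (h.submodule N).exists_span_singleton_eq_top_of_semilocal
  exact ⟨n, by simpa [map_span] using (congrArg (map N.subtype) hn).symm⟩

end IsDistributiveModule

end

namespace Ring

variable {R : Type*} [Ring R]

theorem isUnit_one_add_of_mem_jacobson {x : R} (hx : x ∈ jacobson R) : IsUnit (1 + x) := by
  have hleft : ∀ y ∈ jacobson R, ∃ z, z * (1 + y) = 1 := fun y hy => by
    obtain ⟨z, hz⟩ := Ideal.exists_mul_add_sub_mem_of_mem_jacobson y (by rwa [Ideal.jacobson_bot])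
    exact ⟨z, by rwa [Ideal.mem_bot, sub_eq_zero, add_comm] at hz⟩
  obtain ⟨z, hz⟩ := hleft x hx
  -- `z = 1 - z * x` has a left inverse as well, so `z` is a unit with inverse `1 + x`.
  obtain ⟨w, hw⟩ := hleft (-(z * x)) (neg_mem (Ideal.mul_mem_left _ z hx))
  rw [show 1 + -(z * x) = z by rw [← hz]; noncomm_ring] at hw
  obtain rfl : w = 1 + x := left_inv_eq_right_inv hw hz
  exact ⟨⟨1 + x, z, hw, hz⟩, rfl⟩

theorem op_mem_jacobson {x : R} (hx : x ∈ jacobson R) : op x ∈ jacobson Rᵐᵒᵖ := by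
  rw [← Ideal.jacobson_bot, Ideal.mem_jacobson_iff]
  intro y
  obtain ⟨u, hu⟩ := isUnit_one_add_of_mem_jacobson (Ideal.mul_mem_right y.unop _ hx)
  refine ⟨op ↑u⁻¹, ?_⟩
  rw [Ideal.mem_bot, ← unop_inj]
  simp only [unop_sub, unop_add, unop_mul, unop_op, unop_one, unop_zero]
  rw [sub_eq_zero, ← mul_assoc, ← add_one_mul, add_comm, ← hu, Units.mul_inv]

end Ring

theorem isSemisimpleRing_quotient_jacobson_mulOpposite (R : Type*) [Ring R]
    [IsSemisimpleRing (R ⧸ Ring.jacobson R)] :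
    IsSemisimpleRing (Rᵐᵒᵖ ⧸ Ring.jacobson Rᵐᵒᵖ) := by
  set ψ : Rᵐᵒᵖ →+* (R ⧸ Ring.jacobson R)ᵐᵒᵖ := RingHom.op (Ideal.Quotient.mk _)
  have hψ : Function.Surjective ψ := fun q =>
    let ⟨a, ha⟩ := Ideal.Quotient.mk_surjective q.unop
    ⟨op a, congrArg op ha⟩
  have hker : RingHom.ker ψ = Ring.jacobson Rᵐᵒᵖ := by
    have : IsSemisimpleRing (Rᵐᵒᵖ ⧸ RingHom.ker ψ) :=
      (RingHom.quotientKerEquivOfSurjective hψ).symm.isSemisimpleRing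
    refine le_antisymm (fun x hx => ?_)
      (Ring.jacobson_le_of_eq_bot (IsSemisimpleRing.jacobson_eq_bot _))
    have : x.unop ∈ Ring.jacobson R := by
      simpa [ψ, Ideal.Quotient.eq_zero_iff_mem] using hx
    simpa using Ring.op_mem_jacobson this
  exact ((RingHom.quotientKerEquivOfSurjective hψ).symm.trans
    (Ideal.quotEquivOfEq hker)).isSemisimpleRing

theorem IsSemilocalRing.isSemisimpleRing_quotient_jacobson {A : Type u} [Ring A]
    (hA : IsSemilocalRing A) : IsSemisimpleRing (A ⧸ Ring.jacobson A) := by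
  rw [IsSemilocalRing, Ideal.jacobson_bot] at hA
  let f : A ⧸ Ring.jacobson A →ₛₗ[Ideal.Quotient.mk (Ring.jacobson A)] A ⧸ Ring.jacobson A :=
    { AddMonoidHom.id _ with map_smul' := fun _ _ => rfl }
  exact (f.isSemisimpleModule_iff_of_bijective Function.bijective_id).mp hA

theorem stmt12 (A : Type u) [Ring A] (hA : IsSemilocalRing A) :
    (∀ (M : Type u) [AddCommGroup M] [Module Aᵐᵒᵖ M],
        Module.Finite Aᵐᵒᵖ M → IsDistributiveModule Aᵐᵒᵖ M →
          ∃ m : M, (⊤ : Submodule Aᵐᵒᵖ M) = span Aᵐᵒᵖ {m}) ∧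
      ∀ (M : Type u) [AddCommGroup M] [Module Aᵐᵒᵖ M],
        IsDistributiveModule Aᵐᵒᵖ M → IsBezoutModule Aᵐᵒᵖ M := by
  have := hA.isSemisimpleRing_quotient_jacobson
  have := isSemisimpleRing_quotient_jacobson_mulOpposite A
  exact ⟨fun M _ _ _ h => h.exists_span_singleton_eq_top_of_semilocal.imp fun _ => Eq.symm,
    fun M _ _ h => h.isBezoutModule_of_semilocal⟩
end

section
/- For any ring A, there exists a cardinal number ℵ such that the cardinality of every ℵ₀-distributive right A-module is at most ℵ. -/
universe u

open Submodule

/-!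
Take a maximal independent family of nonzero cyclic submodules `xᵢA` of `M`. Its sum `D` is
essential in `M`, so `M` embeds into any injective module containing `D`, and such a module can
be chosen with size depending only on `|D|`. Each `xᵢA` maps onto a simple module `A/μᵢ`
with `μᵢ` a maximal right ideal. If infinitely many `i` shared the same `μ`, the sum of those
`xᵢA` modulo the sum of the `xᵢμ` would be an infinite direct sum of copies of `A/μ`. Hence the
family has at most `#(right ideals) + ℵ₀` members, which bounds `|D|` and then `|M|`.
-/

open Cardinal LinearMap

theorem sSupIndep.insert_of_disjoint {α : Type*} [CompleteLattice α] [IsModularLattice α]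
    {s : Set α} {a : α} (hs : sSupIndep s) (ha : Disjoint a (sSup s)) :
    sSupIndep (insert a s) := by
  intro x hx
  by_cases hxa : x = a
  · subst hxa
    exact ha.mono_right (sSup_le_sSup fun y hy => (Set.mem_insert_iff.mp hy.1).resolve_left hy.2)
  have hxs : x ∈ s := (Set.mem_insert_iff.mp hx).resolve_left hxa
  have hsup : sSup (insert a s \ {x}) = sSup (s \ {x}) ⊔ a := by
    rw [Set.insert_sdiff_of_notMem _ (by simpa using Ne.symm hxa), sSup_insert, sup_comm]
  rw [hsup]
  exact (hs hxs).disjoint_sup_right_of_disjoint_sup_left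
    (ha.symm.mono_left (sup_le (le_sSup hxs) (sSup_le_sSup Set.sdiff_subset)))

theorem iSupIndep.inf_sup_iSup_ne {α ι : Type*} [CompleteLattice α] [IsModularLattice α]
    {t : ι → α} (ht : iSupIndep t) {i : ι} {a : α} (ha : a ≤ t i) :
    t i ⊓ (a ⊔ ⨆ (j) (_ : j ≠ i), t j) = a := by
  rw [inf_comm, sup_inf_assoc_of_le _ ha, inf_comm, (ht i).eq_bot, sup_bot_eq]

namespace Submodule

variable {R M : Type*} [Ring R] [AddCommGroup M] [Module R M]

def IsEssential (D : Submodule R M) : Prop :=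
  ∀ N : Submodule R M, Disjoint D N → N = ⊥

theorem IsEssential.injective {N : Type*} [AddCommGroup N] [Module R N] {D : Submodule R M}
    (hD : D.IsEssential) {f : M →ₗ[R] N} (hf : Function.Injective (f ∘ₗ D.subtype)) :
    Function.Injective f := by
  rw [← LinearMap.ker_eq_bot]
  refine hD _ (disjoint_def.mpr fun x hxD hxf => ?_)
  have : (⟨x, hxD⟩ : D) = 0 := hf (by simpa using hxf)
  simpa using congrArg Subtype.val this

theorem exists_sSupIndep_span_singleton_isEssential (R M : Type*) [Ring R] [AddCommGroup M]
    [Module R M] :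
    ∃ s : Set (Submodule R M), sSupIndep s ∧ (∀ p ∈ s, ∃ z : M, z ≠ 0 ∧ p = span R {z}) ∧
      (sSup s).IsEssential := by
  let S : Set (Set (Submodule R M)) :=
    {s | sSupIndep s ∧ ∀ p ∈ s, ∃ z : M, z ≠ 0 ∧ p = span R {z}}
  obtain ⟨s, hmax⟩ := zorn_subset S fun c hcS hc =>
    ⟨⋃₀ c, ⟨iSupIndep_sUnion_of_directed hc.directedOn fun s hs => (hcS hs).1,
      fun _ ⟨s, hs, hp⟩ => (hcS hs).2 _ hp⟩, fun _ => Set.subset_sUnion_of_mem⟩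
  obtain ⟨hind, hcyc⟩ := hmax.prop
  refine ⟨s, hind, hcyc, fun N hN => ?_⟩
  by_contra hN0
  obtain ⟨z, hzN, hz⟩ := exists_mem_ne_zero_of_ne_bot hN0
  have hdisj : Disjoint (span R {z}) (sSup s) :=
    (hN.mono_right ((span_singleton_le_iff_mem z N).mpr hzN)).symm
  have hmem : span R {z} ∈ s := hmax.mem_of_prop_insert
    ⟨hind.insert_of_disjoint hdisj, Set.forall_mem_insert.mpr ⟨⟨z, hz, rfl⟩, hcyc⟩⟩
  exact hz (span_singleton_eq_bot.mp (disjoint_self.mp (hdisj.mono_right (le_sSup hmem))))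

end Submodule

theorem cardinalMk_sSup_span_singleton_le {R M : Type u} [Ring R] [AddCommGroup M] [Module R M]
    {s : Set (Submodule R M)} (hs : ∀ p ∈ s, ∃ z : M, p = span R {z}) :
    #↥(sSup s) ≤ #R ^ #s := by
  choose z hz using hs
  have hspan : sSup s = span R (Set.range fun p : s => z p p.2) := by
    rw [sSup_eq_iSup', span_range_eq_iSup]
    exact iSup_congr fun p => hz p p.2
  rw [hspan, ← Finsupp.range_linearCombination, power_def]
  exact (mk_le_of_surjective (LinearMap.surjective_rangeRestrict _)).trans
    (mk_le_of_injective DFunLike.coe_injective)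

open CategoryTheory in
theorem exists_cardinal_bound_of_isEssential (R : Type u) [Ring R] (c : Cardinal.{u}) :
    ∃ κ : Cardinal.{u}, ∀ (M : Type u) [AddCommGroup M] [Module R M] (D : Submodule R M),
      D.IsEssential → #D ≤ c → #M ≤ κ := by
  -- Every module of size at most `c` is a quotient of the free module on `c.out`; `M` embeds into
  -- the chosen injective module `Injective.under` of that quotient.
  refine ⟨⨆ K : Submodule R (c.out →₀ R),
    #(Injective.under (ModuleCat.of R ((c.out →₀ R) ⧸ K)) : ModuleCat.{u} R),
    fun M _ _ D hD hDc => ?_⟩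
  obtain ⟨e⟩ : Nonempty (D ↪ c.out) := by rwa [← Cardinal.le_def, Cardinal.mk_out]
  let φ := Finsupp.linearCombination R (Function.invFun e)
  have hφ : Function.Surjective φ :=
    Finsupp.linearCombination_surjective R (Function.invFun_surjective e.injective)
  let X := ModuleCat.of R ((c.out →₀ R) ⧸ ker φ)
  let β : ModuleCat.of R D ⟶ Injective.under X :=
    ModuleCat.ofHom (φ.quotKerEquivOfSurjective hφ).symm.toLinearMap ≫ Injective.ι X
  let α : ModuleCat.of R D ⟶ ModuleCat.of R M := ModuleCat.ofHom D.subtype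
  have : Mono α := (ModuleCat.mono_iff_injective α).mpr D.injective_subtype
  have hβ : Function.Injective β :=
    ((ModuleCat.mono_iff_injective (Injective.ι X)).mp inferInstance).comp
      (LinearEquiv.injective _)
  have hfactor : (Injective.factorThru β α).hom ∘ₗ D.subtype = β.hom :=
    congrArg ModuleCat.Hom.hom (Injective.comp_factorThru β α)
  have hg : Function.Injective (Injective.factorThru β α).hom :=
    hD.injective (hfactor ▸ hβ)
  exact (mk_le_of_injective hg).trans (le_ciSup bddAbove_of_small (ker φ))

section Subfactor

variable {R M ι : Type*} [Ring R] [AddCommGroup M] [Module R M] {x : ι → M} {μ : Submodule R R}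

theorem exists_isCoatom_ker_toSpanSingleton_le {x : M} (hx : x ≠ 0) :
    ∃ μ : Submodule R R, IsCoatom μ ∧ ker (toSpanSingleton R M x) ≤ μ := by
  obtain ⟨μ, hμ, hle⟩ := Ideal.exists_le_maximal (ker (toSpanSingleton R M x))
    ((Ideal.ne_top_iff_one _).mpr (by simpa using hx))
  exact ⟨μ, hμ.1, hle⟩

theorem smul_mem_map_toSpanSingleton_iff {x : M} (hμ : ker (toSpanSingleton R M x) ≤ μ) (r : R) :
    r • x ∈ μ.map (toSpanSingleton R M x) ↔ r ∈ μ := by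
  refine ⟨fun ⟨s, hs, hsr⟩ => ?_, fun hr => ⟨r, hr, rfl⟩⟩
  have hrs : r - s ∈ μ := hμ (by simp [sub_smul, ← hsr])
  simpa using μ.add_mem hrs hs

theorem mem_of_smul_mem_iSup_map_sup_iSup_ne (hind : iSupIndep fun i => span R {x i})
    (hker : ∀ i, ker (toSpanSingleton R M (x i)) ≤ μ) {i : ι} {r : R}
    (hr : r • x i ∈ (⨆ j, μ.map (toSpanSingleton R M (x j))) ⊔ ⨆ (j) (_ : j ≠ i), span R {x j}) :
    r ∈ μ := by
  have hle : ∀ j, μ.map (toSpanSingleton R M (x j)) ≤ span R {x j} := fun j =>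
    LinearMap.span_singleton_eq_range R M (x j) ▸ map_le_range
  have hsup : (⨆ j, μ.map (toSpanSingleton R M (x j))) ⊔ ⨆ (j) (_ : j ≠ i), span R {x j} ≤
      μ.map (toSpanSingleton R M (x i)) ⊔ ⨆ (j) (_ : j ≠ i), span R {x j} := by
    refine sup_le (iSup_le fun j => ?_) le_sup_right
    by_cases hji : j = i
    · subst hji; exact le_sup_left
    · exact (hle j).trans ((le_iSup₂ (f := fun k (_ : k ≠ i) => span R {x k}) j hji).trans
        le_sup_right)
  rw [← smul_mem_map_toSpanSingleton_iff (hker i)]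
  exact (hind.inf_sup_iSup_ne (hle i)).le ⟨smul_mem _ r (mem_span_singleton_self _), hsup hr⟩

theorem span_range_mk_eq_top (x : ι → M) :
    span R (Set.range fun i => (⟨x i, subset_span (Set.mem_range_self i)⟩ :
      span R (Set.range x))) = ⊤ := by
  convert span_span_coe_preimage (R := R) (s := Set.range x)
  ext y
  exact ⟨fun ⟨i, hi⟩ => ⟨i, by rw [← hi]⟩, fun ⟨i, hi⟩ => ⟨i, Subtype.ext hi⟩⟩

end Subfactor

theorem not_isAleph0Distributive_of_iSupIndep {R M : Type u} [Ring R] [AddCommGroup M]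
    [Module R M] {ι : Type u} [Infinite ι] {x : ι → M} (hind : iSupIndep fun i => span R {x i})
    {μ : Submodule R R} (hμ : IsCoatom μ) (hker : ∀ i, ker (toSpanSingleton R M (x i)) ≤ μ) :
    ¬ IsAleph0Distributive R M := by
  let L := ⨆ i, μ.map (toSpanSingleton R M (x i))
  let N := span R (Set.range x)
  let P : Submodule R N := L.comap N.subtype
  let n : ι → N := fun i => ⟨x i, subset_span (Set.mem_range_self i)⟩
  let f : ι → R →ₗ[R] N ⧸ P := fun i => P.mkQ ∘ₗ toSpanSingleton R N (n i)
  have hf : ∀ i r, f i r = 0 ↔ r • x i ∈ L := fun i r => Submodule.Quotient.mk_eq_zero P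
  have hsmul : ∀ i r, r ∈ μ → r • x i ∈ L := fun i r hr =>
    le_iSup (fun j => μ.map (toSpanSingleton R M (x j))) i
      ((smul_mem_map_toSpanSingleton_iff (hker i) r).mpr hr)
  have hkerf : ∀ i, ker (f i) = μ := fun i => by
    ext r
    rw [mem_ker, hf]
    exact ⟨fun h => mem_of_smul_mem_iSup_map_sup_iSup_ne hind hker (mem_sup_left h), hsmul i r⟩
  let e : ∀ i, (R ⧸ μ) ≃ₗ[R] range (f i) := fun i =>
    (quotEquivOfEq _ _ (hkerf i).symm).trans (f i).quotKerEquivRange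
  have : IsSimpleModule R (R ⧸ μ) := isSimpleModule_iff_isCoatom.mpr hμ
  refine fun hM => hM ⟨N, P, ι, ‹_›, fun i => range (f i), fun i => ?_, ?_,
    fun i => IsSimpleModule.congr (e i).symm, fun i j => ⟨(e i).symm.trans (e j)⟩⟩
  · rw [disjoint_def]
    rintro _ ⟨r, rfl⟩ hr
    have hle : ⨆ (j) (_ : j ≠ i), range (f j) ≤
        ((⨆ (j) (_ : j ≠ i), span R {x j}).comap N.subtype).map P.mkQ := by
      refine iSup₂_le fun j hj => ?_
      rintro _ ⟨s, rfl⟩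
      exact ⟨s • n j, le_iSup₂ (f := fun k (_ : k ≠ i) => span R {x k}) j hj
        (smul_mem _ s (mem_span_singleton_self _)), rfl⟩
    obtain ⟨y, hy, hyr⟩ := hle hr
    have hdiff : r • x i - y ∈ L := (Submodule.Quotient.eq P).mp hyr.symm
    rw [hf]
    exact hsmul i r (mem_of_smul_mem_iSup_map_sup_iSup_ne hind hker
      (by simpa using add_mem_sup hdiff (show (y : M) ∈ _ from hy)))
  · have hn : span R (Set.range n) = ⊤ := span_range_mk_eq_top x
    simp_rw [f, range_comp, ← LinearMap.span_singleton_eq_range, ← Submodule.map_iSup,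
      ← span_range_eq_iSup, hn, Submodule.map_top, range_mkQ]

theorem IsAleph0Distributive.cardinalMk_le_of_sSupIndep {R M : Type u} [Ring R]
    [AddCommGroup M] [Module R M] (hM : IsAleph0Distributive R M) {s : Set (Submodule R M)}
    (hs : sSupIndep s) (hbot : ∀ p ∈ s, p ≠ ⊥) : #s ≤ #(Submodule R R) + ℵ₀ := by
  by_contra! hlt
  have : Infinite s := Cardinal.infinite_iff.mpr (le_add_self.trans hlt.le)
  choose x hxp hx0 using fun p : s => exists_mem_ne_zero_of_ne_bot (hbot p p.2)
  choose μ hμ hker using fun p : s => exists_isCoatom_ker_toSpanSingleton_le (R := R) (hx0 p)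
  obtain ⟨ν, hν⟩ := exists_infinite_fiber μ (le_self_add.trans_lt hlt)
  obtain ⟨⟨p₀, hp₀⟩⟩ := hν.nonempty
  have hindx : iSupIndep fun p : s => span R {x p} :=
    ((sSupIndep_iff s).mp hs).mono fun p => (span_singleton_le_iff_mem _ _).mpr (hxp p)
  exact not_isAleph0Distributive_of_iSupIndep (ι := μ ⁻¹' {ν}) (x := fun p => x p)
    (hindx.comp Subtype.val_injective) (hp₀ ▸ hμ p₀) (fun p => (hker p).trans_eq p.2) hM

theorem stmt16 (A : Type u) [Ring A] :
    ∃ κ : Cardinal.{u}, ∀ (M : Type u) [AddCommGroup M] [Module Aᵐᵒᵖ M],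
      IsAleph0Distributive Aᵐᵒᵖ M → Cardinal.mk M ≤ κ := by
  obtain ⟨κ, hκ⟩ :=
    exists_cardinal_bound_of_isEssential Aᵐᵒᵖ (#Aᵐᵒᵖ ^ (#(Submodule Aᵐᵒᵖ Aᵐᵒᵖ) + ℵ₀))
  refine ⟨κ, fun M _ _ hM => ?_⟩
  obtain ⟨s, hind, hcyc, hess⟩ := exists_sSupIndep_span_singleton_isEssential Aᵐᵒᵖ M
  have hcard : #s ≤ #(Submodule Aᵐᵒᵖ Aᵐᵒᵖ) + ℵ₀ :=
    hM.cardinalMk_le_of_sSupIndep hind fun p hp => by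
      obtain ⟨z, hz, rfl⟩ := hcyc p hp
      exact span_singleton_eq_bot.not.mpr hz
  have hsize : #↥(sSup s) ≤ #Aᵐᵒᵖ ^ #s := cardinalMk_sSup_span_singleton_le fun p hp => by
    obtain ⟨z, -, rfl⟩ := hcyc p hp
    exact ⟨z, rfl⟩
  exact hκ M (sSup s) hess (hsize.trans (power_le_power_left (mk_ne_zero _) hcard))
end

section
/- Let M be a distributive right module over a ring A such that all simple subfactors of M are isomorphic to each other (for example, this holds when A is a local ring). Then M is a uniserial module. -/
universe u

open Submodule

section Aux
variable {R M : Type u} [Ring R] [AddCommGroup M] [Module R M]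

lemma aux_map_inf (K A B : Submodule R M) (hA : K ≤ A) (hB : K ≤ B) :
    map K.mkQ A ⊓ map K.mkQ B = map K.mkQ (A ⊓ B) := by
  apply comap_injective_of_surjective K.mkQ_surjective
  rw [comap_inf, comap_map_eq, comap_map_eq, comap_map_eq, K.ker_mkQ,
    sup_eq_left.mpr hA, sup_eq_left.mpr hB, sup_eq_left.mpr (le_inf hA hB)]

lemma aux_quot_distrib (hd : IsDistributiveModule R M) (K : Submodule R M) :
    IsDistributiveModule R (M ⧸ K) := by
  intro A B C
  have hm : ∀ D : Submodule R (M ⧸ K), map K.mkQ (comap K.mkQ D) = D := fun D => by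
    rw [map_comap_eq, K.range_mkQ, top_inf_eq]
  have hK : ∀ D : Submodule R (M ⧸ K), K ≤ comap K.mkQ D := fun D d hdK => by
    have h0 : K.mkQ d = 0 := (Submodule.Quotient.mk_eq_zero K).mpr hdK
    simp [mem_comap, h0]
  set A' := comap K.mkQ A
  set B' := comap K.mkQ B
  set C' := comap K.mkQ C
  calc A ⊓ (B ⊔ C) = map K.mkQ A' ⊓ map K.mkQ (B' ⊔ C') := by
        rw [Submodule.map_sup, hm, hm, hm]
    _ = map K.mkQ (A' ⊓ (B' ⊔ C')) :=
        aux_map_inf K _ _ (hK A) ((hK B).trans le_sup_left)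
    _ = map K.mkQ ((A' ⊓ B') ⊔ (A' ⊓ C')) := by rw [hd]
    _ = (A ⊓ B) ⊔ (A ⊓ C) := by
        rw [Submodule.map_sup, ← aux_map_inf K _ _ (hK A) (hK B),
          ← aux_map_inf K _ _ (hK A) (hK C), hm, hm, hm]

lemma aux_helper (x : M) (Y : Submodule R M) (hx : x ∉ Y) :
    ∃ P : Submodule R ↥(span R {x}), IsSimpleModule R (↥(span R {x}) ⧸ P) ∧
      (span R {x}) ⊓ Y ≤ map (span R {x}).subtype P ∧
      x ∉ map (span R {x}).subtype P := by
  set X := span R {x}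
  have hfin : Module.Finite R ↥X := Module.Finite.span_singleton R x
  have hcoat : IsCoatomic (Submodule R ↥X) :=
    CompleteLattice.coatomic_of_top_compact ((fg_iff_compact ⊤).mp Module.Finite.fg_top)
  have hxX : x ∈ X := mem_span_singleton_self x
  have hne : comap X.subtype Y ≠ ⊤ := by
    intro h
    have : (⟨x, hxX⟩ : ↥X) ∈ comap X.subtype Y := h ▸ mem_top
    exact hx this
  obtain ⟨P, hP, hle⟩ := (eq_top_or_exists_le_coatom (comap X.subtype Y)).resolve_left hne
  refine ⟨P, isSimpleModule_iff_isCoatom.mpr hP, ?_, ?_⟩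
  · rintro a ⟨ha, haY⟩
    exact ⟨⟨a, ha⟩, hle haY, rfl⟩
  · rintro ⟨p, hp, hpx⟩
    apply hP.1
    rw [eq_top_iff]
    rintro ⟨a, ha⟩ -
    obtain ⟨r, rfl⟩ := mem_span_singleton.mp ha
    have : (⟨r • x, ha⟩ : ↥X) = r • p := by
      apply Subtype.ext
      show r • x = r • (p : M)
      rw [← hpx]; rfl
    rw [this]
    exact P.smul_mem r hp

end Aux

theorem stmt17 (A M : Type u) [Ring A] [AddCommGroup M] [Module Aᵐᵒᵖ M]
    (hd : IsDistributiveModule Aᵐᵒᵖ M)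
    (hiso : ∀ (N : Submodule Aᵐᵒᵖ M) (P : Submodule Aᵐᵒᵖ N)
        (N' : Submodule Aᵐᵒᵖ M) (P' : Submodule Aᵐᵒᵖ N'),
      IsSimpleModule Aᵐᵒᵖ (N ⧸ P) → IsSimpleModule Aᵐᵒᵖ (N' ⧸ P') →
        Nonempty ((N ⧸ P) ≃ₗ[Aᵐᵒᵖ] (N' ⧸ P'))) :
    ∀ N P : Submodule Aᵐᵒᵖ M, N ≤ P ∨ P ≤ N := by
  intro N P
  by_contra hcon
  push_neg at hcon
  obtain ⟨hNP, hPN⟩ := hcon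
  obtain ⟨x, hxN, hxP⟩ := SetLike.not_le_iff_exists.mp hNP
  obtain ⟨y, hyP, hyN⟩ := SetLike.not_le_iff_exists.mp hPN
  set X := span Aᵐᵒᵖ ({x} : Set M) with hXdef
  set Y := span Aᵐᵒᵖ ({y} : Set M) with hYdef
  have hXN : X ≤ N := span_le.mpr (Set.singleton_subset_iff.mpr hxN)
  have hYP : Y ≤ P := span_le.mpr (Set.singleton_subset_iff.mpr hyP)
  have hxY : x ∉ Y := fun h => hxP (hYP h)
  have hyX : y ∉ X := fun h => hyN (hXN h)
  obtain ⟨PX, hPXs, hPXle, hxPX⟩ := aux_helper x Y hxY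
  obtain ⟨PY, hPYs, hPYle0, hyPY⟩ := aux_helper y X hyX
  set X₁ := map X.subtype PX with hX₁def
  set Y₁ := map Y.subtype PY with hY₁def
  have hX₁X : X₁ ≤ X := map_subtype_le X PX
  have hY₁Y : Y₁ ≤ Y := map_subtype_le Y PY
  have hXY_X₁ : X ⊓ Y ≤ X₁ := hPXle
  have hXY_Y₁ : X ⊓ Y ≤ Y₁ := by rw [inf_comm]; exact hPYle0
  set K := X₁ ⊔ Y₁ with hKdef
  have hXK : X ⊓ K = X₁ := by
    rw [hKdef, hd, inf_eq_right.mpr hX₁X]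
    exact sup_eq_left.mpr (le_trans (inf_le_inf_left X hY₁Y) hXY_X₁)
  have hYK : Y ⊓ K = Y₁ := by
    have h2 : Y ⊓ X₁ ≤ Y₁ :=
      le_trans (inf_le_inf_left Y hX₁X) (by rw [inf_comm]; exact hXY_Y₁)
    rw [hKdef, hd, inf_eq_right.mpr hY₁Y]
    exact sup_eq_right.mpr h2
  have hc2 : (X ⊔ K) ⊓ (Y ⊔ K) = K := by
    rw [hd, inf_eq_right.mpr (le_sup_right : K ≤ X ⊔ K)]
    refine sup_eq_right.mpr ?_
    rw [inf_comm, hd]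
    refine sup_le ?_ ?_
    · rw [inf_comm]; exact hXY_X₁.trans le_sup_left
    · rw [hYK]; exact le_sup_right
  have hxK : x ∉ K := fun h => hxPX (hXK ▸ (⟨mem_span_singleton_self x, h⟩ : x ∈ X ⊓ K))
  set Xb := map K.mkQ X with hXbdef
  set Yb := map K.mkQ Y with hYbdef
  have hmapK : map K.mkQ K = ⊥ :=
    eq_bot_iff.mpr (map_le_iff_le_comap.mpr (by rw [comap_bot, ker_mkQ]))
  have hXbYb : Xb ⊓ Yb = ⊥ := by
    have h1 : Xb = map K.mkQ (X ⊔ K) := by rw [Submodule.map_sup, hmapK, sup_bot_eq]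
    have h2 : Yb = map K.mkQ (Y ⊔ K) := by rw [Submodule.map_sup, hmapK, sup_bot_eq]
    rw [h1, h2, aux_map_inf K _ _ le_sup_right le_sup_right, hc2, hmapK]
  -- the two subfactor isomorphisms
  have hcomapX : comap X.subtype K = PX := by
    apply le_antisymm
    · rintro ⟨a, ha⟩ h
      have : a ∈ X₁ := hXK ▸ (⟨ha, h⟩ : a ∈ X ⊓ K)
      obtain ⟨p, hp, hpa⟩ := this
      rwa [show p = (⟨a, ha⟩ : ↥X) from Subtype.ext hpa] at hp
    · intro p hp
      exact (le_sup_left : X₁ ≤ K) ⟨p, hp, rfl⟩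
  have hcomapY : comap Y.subtype K = PY := by
    apply le_antisymm
    · rintro ⟨a, ha⟩ h
      have : a ∈ Y₁ := hYK ▸ (⟨ha, h⟩ : a ∈ Y ⊓ K)
      obtain ⟨p, hp, hpa⟩ := this
      rwa [show p = (⟨a, ha⟩ : ↥Y) from Subtype.ext hpa] at hp
    · intro p hp
      exact (le_sup_right : Y₁ ≤ K) ⟨p, hp, rfl⟩
  let fX : ↥X →ₗ[Aᵐᵒᵖ] M ⧸ K := K.mkQ ∘ₗ X.subtype
  let fY : ↥Y →ₗ[Aᵐᵒᵖ] M ⧸ K := K.mkQ ∘ₗ Y.subtype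
  have hkerX : LinearMap.ker fX = PX := by
    rw [LinearMap.ker_comp, ker_mkQ]; exact hcomapX
  have hkerY : LinearMap.ker fY = PY := by
    rw [LinearMap.ker_comp, ker_mkQ]; exact hcomapY
  have hrangeX : LinearMap.range fX = Xb := by
    rw [LinearMap.range_comp, range_subtype]
  have hrangeY : LinearMap.range fY = Yb := by
    rw [LinearMap.range_comp, range_subtype]
  let eX : (↥X ⧸ PX) ≃ₗ[Aᵐᵒᵖ] ↥Xb :=
    ((Submodule.quotEquivOfEq PX (LinearMap.ker fX) hkerX.symm).trans
      fX.quotKerEquivRange).trans (LinearEquiv.ofEq _ _ hrangeX)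
  let eY : (↥Y ⧸ PY) ≃ₗ[Aᵐᵒᵖ] ↥Yb :=
    ((Submodule.quotEquivOfEq PY (LinearMap.ker fY) hkerY.symm).trans
      fY.quotKerEquivRange).trans (LinearEquiv.ofEq _ _ hrangeY)
  obtain ⟨e0⟩ := hiso X PX Y PY hPXs hPYs
  let φ : ↥Xb ≃ₗ[Aᵐᵒᵖ] ↥Yb := (eX.symm.trans e0).trans eY
  let g : ↥Xb →ₗ[Aᵐᵒᵖ] M ⧸ K := Xb.subtype + (Yb.subtype ∘ₗ (φ : ↥Xb →ₗ[Aᵐᵒᵖ] ↥Yb))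
  have hg : ∀ u : ↥Xb, g u = (u : M ⧸ K) + ((φ u : ↥Yb) : M ⧸ K) := fun u => rfl
  set D := LinearMap.range g with hDdef
  have hDle : D ≤ Xb ⊔ Yb := by
    rintro _ ⟨u, rfl⟩
    rw [hg]
    exact add_mem_sup u.2 (φ u).2
  have hDXb : D ⊓ Xb = ⊥ := by
    rw [eq_bot_iff]
    rintro z ⟨⟨u, rfl⟩, hz⟩
    rw [hg] at hz ⊢
    have h1 : ((φ u : ↥Yb) : M ⧸ K) ∈ Xb ⊓ Yb :=
      ⟨by simpa using sub_mem hz u.2, (φ u).2⟩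
    rw [hXbYb] at h1
    have h2 : φ u = 0 := Subtype.ext h1
    have h3 : u = 0 := by
      have := φ.injective (h2.trans (map_zero φ).symm)
      exact this
    simp [h3, h2]
  have hDYb : D ⊓ Yb = ⊥ := by
    rw [eq_bot_iff]
    rintro z ⟨⟨u, rfl⟩, hz⟩
    rw [hg] at hz ⊢
    have h1 : ((u : ↥Xb) : M ⧸ K) ∈ Xb ⊓ Yb :=
      ⟨u.2, by simpa using sub_mem hz (φ u).2⟩
    rw [hXbYb] at h1
    have h3 : u = 0 := Subtype.ext h1
    simp [h3]
  have hxb : K.mkQ x ∈ Xb := mem_map_of_mem (mem_span_singleton_self x)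
  have hxb0 : K.mkQ x ≠ (0 : M ⧸ K) :=
    fun h => hxK ((Submodule.Quotient.mk_eq_zero K).mp h)
  have hDne : D ≠ ⊥ := by
    intro hD
    set u : ↥Xb := ⟨K.mkQ x, hxb⟩ with hu
    have hgu : g u = 0 := by
      have : g u ∈ D := LinearMap.mem_range_self g u
      rw [hD] at this
      exact this
    rw [hg] at hgu
    have h1 : ((u : ↥Xb) : M ⧸ K) ∈ Xb ⊓ Yb :=
      ⟨u.2, by rw [eq_neg_of_add_eq_zero_left hgu]; exact Yb.neg_mem (φ u).2⟩
    rw [hXbYb] at h1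
    exact hxb0 h1
  have hdQ := aux_quot_distrib hd K D Xb Yb
  rw [hDXb, hDYb, inf_eq_left.mpr hDle, sup_bot_eq] at hdQ
  exact hDne hdQ
end

section
/- Every distributive module is ℵ₀-distributive: if the lattice of submodules of a right A-module M is distributive, then no subfactor of M is isomorphic to a direct sum of infinitely many pairwise isomorphic simple modules. -/
universe u

open Submodule

section Aux
variable {R M : Type u} [Ring R] [AddCommGroup M] [Module R M]
  (N : Submodule R M) (P : Submodule R N)

/-- The map from submodules of the subfactor to submodules of `M`. -/
noncomputable def auxG (Q : Submodule R (N ⧸ P)) : Submodule R M :=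
  Submodule.map N.subtype (Submodule.comap P.mkQ Q)

theorem aux_g_inj : Function.Injective (auxG N P) :=
  (Submodule.map_injective_of_injective N.injective_subtype).comp
    (Submodule.comap_injective_of_surjective (Submodule.Quotient.mk_surjective P))

theorem aux_comap_sup (Q Q' : Submodule R (N ⧸ P)) :
    Submodule.comap P.mkQ (Q ⊔ Q')
      = Submodule.comap P.mkQ Q ⊔ Submodule.comap P.mkQ Q' := by
  apply le_antisymm
  · intro x hx
    rw [Submodule.mem_comap] at hx
    obtain ⟨y, hy, z, hz, hyz⟩ := Submodule.mem_sup.mp hx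
    obtain ⟨y', rfl⟩ := Submodule.Quotient.mk_surjective P y
    obtain ⟨z', rfl⟩ := Submodule.Quotient.mk_surjective P z
    have hk : x - (y' + z') ∈ Submodule.comap P.mkQ Q := by
      rw [Submodule.mem_comap, map_sub, map_add]
      simp only [Submodule.mkQ_apply] at hyz ⊢
      rw [← hyz]
      simpa using zero_mem Q
    have hx2 : x = (y' + (x - (y' + z'))) + z' := by abel
    rw [hx2]
    exact Submodule.add_mem_sup (add_mem hy hk) hz
  · exact sup_le (Submodule.comap_mono le_sup_left) (Submodule.comap_mono le_sup_right)

theorem aux_distrib_map :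
    (∀ Q Q' : Submodule R (N ⧸ P), auxG N P (Q ⊓ Q') = auxG N P Q ⊓ auxG N P Q') ∧
    (∀ Q Q' : Submodule R (N ⧸ P), auxG N P (Q ⊔ Q') = auxG N P Q ⊔ auxG N P Q') := by
  constructor
  · intro Q Q'
    unfold auxG
    rw [Submodule.comap_inf, Submodule.map_inf _ N.injective_subtype]
  · intro Q Q'
    unfold auxG
    rw [aux_comap_sup, Submodule.map_sup]

end Aux

theorem stmt18 (A M : Type u) [Ring A] [AddCommGroup M] [Module Aᵐᵒᵖ M]
    (h : IsDistributiveModule Aᵐᵒᵖ M) : IsAleph0Distributive Aᵐᵒᵖ M := by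
  rintro ⟨N, P, ι, hι, T, hindep, -, hsimple, hiso⟩
  -- distributivity passes to the subfactor N ⧸ P
  have hd : IsDistributiveModule Aᵐᵒᵖ (N ⧸ P) := by
    have hg := aux_distrib_map (R := Aᵐᵒᵖ) N P
    intro X Y Z
    apply aux_g_inj (R := Aᵐᵒᵖ) N P
    simp only [hg.1, hg.2]
    exact h _ _ _
  -- pick two distinct indices
  haveI := hι
  obtain ⟨i, j, hij⟩ := exists_pair_ne ι
  obtain ⟨e⟩ := hiso i j
  have hdisj : Disjoint (T i) (T j) := hindep.pairwiseDisjoint hij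
  haveI := hsimple i
  haveI : Nontrivial (T i) := IsSimpleModule.nontrivial Aᵐᵒᵖ (T i)
  -- diagonal submodule
  set f : (T i) →ₗ[Aᵐᵒᵖ] (N ⧸ P) :=
    (T i).subtype + (T j).subtype.comp e.toLinearMap with hf
  set X : Submodule Aᵐᵒᵖ (N ⧸ P) := LinearMap.range f with hX
  have hmem : ∀ x : T i, f x = (x : N ⧸ P) + (e x : N ⧸ P) := fun x => rfl
  have hXle : X ≤ T i ⊔ T j := by
    rintro _ ⟨x, rfl⟩
    rw [hmem]
    exact add_mem_sup x.2 (e x).2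
  have hXi : X ⊓ T i = ⊥ := by
    rw [eq_bot_iff]
    rintro y ⟨⟨x, rfl⟩, hy2⟩
    rw [hmem] at hy2 ⊢
    have h1 : (e x : N ⧸ P) ∈ T i ⊓ T j := by
      constructor
      · have : ((e x : N ⧸ P)) = ((x : N ⧸ P) + (e x : N ⧸ P)) - x := by abel
        rw [this]; exact sub_mem hy2 x.2
      · exact (e x).2
    rw [hdisj.eq_bot] at h1
    have hex : e x = 0 := Subtype.ext h1
    have hx : x = 0 := e.injective (by rw [hex]; exact (map_zero e).symm)
    simp [hx, hex]
  have hXj : X ⊓ T j = ⊥ := by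
    rw [eq_bot_iff]
    rintro y ⟨⟨x, rfl⟩, hy2⟩
    rw [hmem] at hy2 ⊢
    have h1 : (x : N ⧸ P) ∈ T i ⊓ T j := by
      refine ⟨x.2, ?_⟩
      have : ((x : N ⧸ P)) = ((x : N ⧸ P) + (e x : N ⧸ P)) - (e x) := by abel
      rw [this]; exact sub_mem hy2 (e x).2
    rw [hdisj.eq_bot] at h1
    have hx : x = 0 := Subtype.ext h1
    simp [hx]
  have hXbot : X = ⊥ := by
    have := hd X (T i) (T j)
    rw [inf_eq_left.mpr hXle, hXi, hXj, bot_sup_eq] at this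
    exact this
  obtain ⟨x, hx⟩ := exists_ne (0 : T i)
  have : f x ∈ X := ⟨x, rfl⟩
  rw [hXbot, Submodule.mem_bot, hmem] at this
  apply hx
  have h1 : (x : N ⧸ P) ∈ T i ⊓ T j := by
    refine ⟨x.2, ?_⟩
    have hxe : ((x : N ⧸ P)) = - (e x : N ⧸ P) := by
      rw [eq_neg_iff_add_eq_zero]; exact this
    rw [hxe]; exact neg_mem (e x).2
  rw [hdisj.eq_bot] at h1
  exact Subtype.ext h1
end

section
/- If A is a right quasi-invariant ring (every maximal right ideal of A is a two-sided ideal), then every Bezout right A-module is distributive. -/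
universe u

open Submodule

section Aux
variable (R M : Type u) [Ring R] [AddCommGroup M] [Module R M]

/-- auxiliary: over a ring whose maximal left ideals are two-sided,
every Bezout left module is distributive. -/
theorem aux_distrib
    (hR : ∀ N : Ideal R, IsCoatom N → ∀ a ∈ N, ∀ r : R, a * r ∈ N)
    (hM : ∀ N : Submodule R M, N.FG → ∃ m : M, N = span R {m}) :
    ∀ X Y Z : Submodule R M, X ⊓ (Y ⊔ Z) = X ⊓ Y ⊔ X ⊓ Z := by
  have key : ∀ y z : M, (span R {z}).comap (LinearMap.toSpanSingleton R M y) ⊔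
      (span R {y}).comap (LinearMap.toSpanSingleton R M z) = ⊤ := by
    intro y z
    by_contra hne
    obtain ⟨w, hw⟩ := hM (span R {y} ⊔ span R {z})
      ((fg_span_singleton y).sup (fg_span_singleton z))
    have hy : y ∈ span R {w} := hw ▸ (le_sup_left (a := span R {y}) (mem_span_singleton_self y))
    have hz : z ∈ span R {w} := hw ▸ (le_sup_right (b := span R {z}) (mem_span_singleton_self z))
    obtain ⟨b, hb⟩ := mem_span_singleton.mp hy
    obtain ⟨c, hc⟩ := mem_span_singleton.mp hz
    have hwmem : w ∈ span R {y} ⊔ span R {z} := hw ▸ mem_span_singleton_self w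
    obtain ⟨u, hu, v, hv, huv⟩ := mem_sup.mp hwmem
    obtain ⟨s, hs⟩ := mem_span_singleton.mp hu
    obtain ⟨t, ht⟩ := mem_span_singleton.mp hv
    obtain ⟨m, hmax, hle⟩ := Ideal.exists_le_maximal _ hne
    have hco : IsCoatom m := Ideal.isMaximal_def.mp hmax
    have hmul : ∀ a ∈ m, ∀ r : R, a * r ∈ m := hR m hco
    have hw2 : w - s • y = t • z := by rw [hs, ht, ← huv]; abel
    have hw3 : w - t • z = s • y := by rw [hs, ht, ← huv]; abel
    have e1 : (1 - b * s) • y = (b * t) • z := by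
      calc (1 - b * s) • y = b • w - b • (s • y) := by
              rw [sub_smul, one_smul, mul_smul, hb]
        _ = b • (w - s • y) := (smul_sub b _ _).symm
        _ = b • (t • z) := by rw [hw2]
        _ = (b * t) • z := (mul_smul b t z).symm
    have e2 : (1 - c * t) • z = (c * s) • y := by
      calc (1 - c * t) • z = c • w - c • (t • z) := by
              rw [sub_smul, one_smul, mul_smul, hc]
        _ = c • (w - t • z) := (smul_sub c _ _).symm
        _ = c • (s • y) := by rw [hw3]
        _ = (c * s) • y := (mul_smul c s y).symm
    have e3 : (c * s) • y = z - (c * t) • z := by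
      rw [← e2, sub_smul, one_smul]
    -- memberships in m
    have h1 : (1 : R) - b * s ∈ m := by
      apply hle; apply mem_sup_left
      rw [mem_comap, LinearMap.toSpanSingleton_apply, e1]
      exact smul_mem _ _ (mem_span_singleton_self z)
    have h2 : (1 : R) - c * t ∈ m := by
      apply hle; apply mem_sup_right
      rw [mem_comap, LinearMap.toSpanSingleton_apply, e2]
      exact smul_mem _ _ (mem_span_singleton_self y)
    have h3 : c * s ∈ m := by
      apply hle; apply mem_sup_left
      rw [mem_comap, LinearMap.toSpanSingleton_apply, e3]
      exact sub_mem (mem_span_singleton_self z) (smul_mem _ _ (mem_span_singleton_self z))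
    have hone : (1 : R) ∉ m := fun h => hco.1 ((Ideal.eq_top_iff_one m).mpr h)
    have hbm : b ∉ m := by
      intro h
      have : (1 : R) ∈ m := by
        have := m.add_mem h1 (hmul b h s)
        rwa [sub_add_cancel] at this
      exact hone this
    -- maximality gives a left inverse of b mod m
    have hlt : m < m ⊔ span R {b} := by
      refine lt_of_le_of_ne le_sup_left fun h => hbm ?_
      exact h ▸ (le_sup_right (a := m) (mem_span_singleton_self b))
    have htop : m ⊔ span R {b} = ⊤ := hco.2 _ hlt
    have hone' : (1 : R) ∈ m ⊔ span R {b} := htop ▸ mem_top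
    obtain ⟨m₀, hm₀, pb, hpb, hsum⟩ := mem_sup.mp hone'
    obtain ⟨p, hp⟩ := mem_span_singleton.mp hpb
    have hm0eq : m₀ = 1 - p * b := by
      rw [← hsum, ← hp, smul_eq_mul]; abel
    have h4 : s - p ∈ m := by
      have key4 : s - p = m₀ * s + p * (b * s - 1) := by
        rw [hm0eq]; noncomm_ring
      rw [key4]
      refine m.add_mem (hmul m₀ hm₀ s) ?_
      have : b * s - 1 ∈ m := by
        have := m.neg_mem h1
        rwa [neg_sub] at this
      simpa [smul_eq_mul] using m.smul_mem p this
    have h5 : (1 : R) - s * b ∈ m := by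
      have key5 : (1 : R) - s * b = m₀ - (s - p) * b := by
        rw [hm0eq]; noncomm_ring
      rw [key5]
      exact m.sub_mem hm₀ (hmul _ h4 b)
    have h6 : c ∈ m := by
      have key6 : c = c * (1 - s * b) + (c * s) * b := by noncomm_ring
      rw [key6]
      refine m.add_mem ?_ (hmul _ h3 b)
      simpa [smul_eq_mul] using m.smul_mem c h5
    have h7 : (1 : R) ∈ m := by
      have := m.add_mem h2 (hmul c h6 t)
      rwa [sub_add_cancel] at this
    exact hone h7
  -- derive distributivity
  intro X Y Z
  apply le_antisymm
  · intro x hx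
    obtain ⟨hxX, hxYZ⟩ := mem_inf.mp hx
    obtain ⟨y, hy, z, hz, hyz⟩ := mem_sup.mp hxYZ
    have := key y z
    have hone : (1 : R) ∈ (span R {z}).comap (LinearMap.toSpanSingleton R M y) ⊔
        (span R {y}).comap (LinearMap.toSpanSingleton R M z) := this ▸ mem_top
    obtain ⟨a1, ha1, a2, ha2, ha⟩ := mem_sup.mp hone
    rw [mem_comap, LinearMap.toSpanSingleton_apply] at ha1 ha2
    have hxz : a1 • x ∈ X ⊓ Z := by
      refine mem_inf.mpr ⟨X.smul_mem a1 hxX, ?_⟩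
      have : a1 • x = a1 • y + a1 • z := by rw [← smul_add, hyz]
      rw [this]
      exact Z.add_mem ((span_singleton_le_iff_mem z Z).mpr hz ha1) (Z.smul_mem a1 hz)
    have hxy : a2 • x ∈ X ⊓ Y := by
      refine mem_inf.mpr ⟨X.smul_mem a2 hxX, ?_⟩
      have : a2 • x = a2 • y + a2 • z := by rw [← smul_add, hyz]
      rw [this]
      exact Y.add_mem (Y.smul_mem a2 hy) ((span_singleton_le_iff_mem y Y).mpr hy ha2)
    have hxeq : x = a2 • x + a1 • x := by
      rw [← add_smul]
      rw [show a2 + a1 = 1 by rw [← ha]; abel, one_smul]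
    rw [hxeq]
    exact add_mem (mem_sup_left hxy) (mem_sup_right hxz)
  · exact sup_le (le_inf inf_le_left ((inf_le_right).trans le_sup_left))
      (le_inf inf_le_left ((inf_le_right).trans le_sup_right))

end Aux

/-- the op linear equivalence between A as a right A-module and Aᵐᵒᵖ as left module. -/
def opLinEquiv (A : Type u) [Ring A] : A ≃ₗ[Aᵐᵒᵖ] Aᵐᵒᵖ where
  toFun := MulOpposite.op
  invFun := MulOpposite.unop
  map_add' := fun _ _ => rfl
  map_smul' := fun _ _ => rfl
  left_inv := fun _ => rfl
  right_inv := fun _ => rfl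


theorem stmt19 (A : Type u) [Ring A]
    (hA : ∀ N : Submodule Aᵐᵒᵖ A, IsCoatom N → ∀ a ∈ N, ∀ r : A, r * a ∈ N)
    (M : Type u) [AddCommGroup M] [Module Aᵐᵒᵖ M] (hM : IsBezoutModule Aᵐᵒᵖ M) :
    IsDistributiveModule Aᵐᵒᵖ M := by
  apply aux_distrib Aᵐᵒᵖ M _ hM
  intro N' hco a' ha' r'
  set e := opLinEquiv A with he
  set K : Submodule Aᵐᵒᵖ A := Submodule.comap (e : A →ₗ[Aᵐᵒᵖ] Aᵐᵒᵖ) N' with hK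
  have hmap : Submodule.map (e : A →ₗ[Aᵐᵒᵖ] Aᵐᵒᵖ) K = N' :=
    Submodule.map_comap_eq_of_surjective e.surjective N'
  have hKco : IsCoatom K := by
    rw [← OrderIso.isCoatom_iff (Submodule.orderIsoMapComap e) K]
    show IsCoatom (Submodule.map (e : A →ₗ[Aᵐᵒᵖ] Aᵐᵒᵖ) K)
    rw [hmap]; exact hco
  have ha : a'.unop ∈ K := by
    rw [hK, mem_comap]
    exact ha'
  have h1 : r'.unop * a'.unop ∈ K := hA K hKco a'.unop ha r'.unop
  have h2 : (e : A →ₗ[Aᵐᵒᵖ] Aᵐᵒᵖ) (r'.unop * a'.unop) ∈ N' := mem_comap.mp h1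
  have h3 : (e : A →ₗ[Aᵐᵒᵖ] Aᵐᵒᵖ) (r'.unop * a'.unop) = a' * r' := rfl
  rwa [h3] at h2
end
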